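/- arXiv:0803.3689 — 4 statements merged into one kernel-verified Lean document; each statement's English description precedes it below -/
import Mathlib

section
/- If P is a finitely generated graded projective Λ-module and Q a finitely generated graded projective Γ-module, then P ⊗_k^t Q is a graded projective module over the twisted tensor product Λ ⊗_k^t Γ. -/
/-!
An `S`-module `M` over a `k`-algebra `S` is projective as soon as the action map `S ⊗ M → M` has
an `S`-linear section, since `S ⊗ M` is `S`-projective when `M` is `k`-projective. Projectivity of
`P` gives such a section `s : P → Λ ⊗ P`; composing with the projections onto total degrees it can
be chosen to send `𝓟 a` into total degree `a`. With a section `τ` for `Q`, the composite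
`P ⊗ Q → (Λ ⊗ P) ⊗ (Γ ⊗ Q) → T ⊗ (P ⊗ Q)`, whose second map moves `γ` past `p` at the cost of
`t⟨|p|,|γ|⟩⁻¹`, is a section of the `T`-action. It is `T`-linear because, by bimultiplicativity of
`t`, the twists of the action, of the product of `T` and of the shuffle cancel on elements of the
right total degree.
-/

open TensorProduct DirectSum

noncomputable section

section TensorSmul

variable (R S M : Type*) [CommSemiring R] [Semiring S] [Algebra R S]
  [AddCommMonoid M] [Module R M] [Module S M] [IsScalarTower R S M]

def tensorSmul : S ⊗[R] M →ₗ[S] M :=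
  AlgebraTensorModule.lift (LinearMap.toSpanSingleton S _ LinearMap.id)

variable {R S M}

@[simp] lemma tensorSmul_tmul (s : S) (m : M) : tensorSmul R S M (s ⊗ₜ m) = s • m := rfl

lemma exists_tensorSmul_section [Module.Projective S M] :
    ∃ s : M →ₗ[S] S ⊗[R] M, ∀ m, tensorSmul R S M (s m) = m := by
  obtain ⟨s, hs⟩ := Module.projective_lifting_property (tensorSmul R S M) LinearMap.id
    fun m => ⟨1 ⊗ₜ m, one_smul S m⟩
  exact ⟨s, LinearMap.congr_fun hs⟩

end TensorSmul

theorem Module.Projective.of_tensorSmul_section {R S M : Type*} [CommRing R] [Ring S]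
    [Algebra R S] [AddCommGroup M] [Module R M] [Module S M] [IsScalarTower R S M]
    [Module.Projective R M] (s : M →ₗ[S] S ⊗[R] M) (hs : ∀ m, tensorSmul R S M (s m) = m) :
    Module.Projective S M :=
  .of_split s (tensorSmul R S M) (LinearMap.ext hs)

namespace TensorProduct

variable {k ι κ M N : Type*} [CommSemiring k] [DecidableEq ι] [DecidableEq κ]
  [AddCommMonoid M] [Module k M] [AddCommMonoid N] [Module k N]
  (ℳ : ι → Submodule k M) (𝒩 : κ → Submodule k N)
  [Decomposition ℳ] [Decomposition 𝒩]

theorem induction_on_homogeneous_left {motive : M ⊗[k] N → Prop} (x : M ⊗[k] N)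
    (zero : motive 0) (add : ∀ x y, motive x → motive y → motive (x + y))
    (tmul : ∀ i m n, m ∈ ℳ i → motive (m ⊗ₜ n)) : motive x := by
  induction x using TensorProduct.induction_on with
  | zero => exact zero
  | add x y hx hy => exact add x y hx hy
  | tmul m n =>
    induction m using Decomposition.inductionOn ℳ with
    | zero => simpa using zero
    | add m m' hm hm' => simpa [add_tmul] using add _ _ hm hm'
    | homogeneous m => exact tmul _ m n m.2

theorem induction_on_homogeneous_right {motive : M ⊗[k] N → Prop} (x : M ⊗[k] N)
    (zero : motive 0) (add : ∀ x y, motive x → motive y → motive (x + y))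
    (tmul : ∀ j m n, n ∈ 𝒩 j → motive (m ⊗ₜ n)) : motive x := by
  induction x using TensorProduct.induction_on with
  | zero => exact zero
  | add x y hx hy => exact add x y hx hy
  | tmul m n =>
    induction n using Decomposition.inductionOn 𝒩 with
    | zero => simpa using zero
    | add n n' hn hn' => simpa [tmul_add] using add _ _ hn hn'
    | homogeneous n => exact tmul _ m n n.2

theorem induction_on_homogeneous {motive : M ⊗[k] N → Prop} (x : M ⊗[k] N)
    (zero : motive 0) (add : ∀ x y, motive x → motive y → motive (x + y))
    (tmul : ∀ i j m n, m ∈ ℳ i → n ∈ 𝒩 j → motive (m ⊗ₜ n)) : motive x := by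
  induction x using induction_on_homogeneous_left ℳ with
  | zero => exact zero
  | add x y hx hy => exact add x y hx hy
  | tmul i m n hm =>
    induction n using Decomposition.inductionOn 𝒩 with
    | zero => simpa using zero
    | add n n' hn hn' => simpa [tmul_add] using add _ _ hn hn'
    | homogeneous n => exact tmul i _ m n hm n.2

def decomposeEquiv : M ⊗[k] N ≃ₗ[k] ⨁ i : ι × κ, ℳ i.1 ⊗[k] 𝒩 i.2 :=
  (congr (decomposeLinearEquiv ℳ) (decomposeLinearEquiv 𝒩)).trans
    (TensorProduct.directSum k k (fun i => ℳ i) (fun j => 𝒩 j))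

theorem decomposeEquiv_tmul_of_mem {i j} {m : M} {n : N} (hm : m ∈ ℳ i) (hn : n ∈ 𝒩 j) :
    decomposeEquiv ℳ 𝒩 (m ⊗ₜ n) =
      lof k (ι × κ) (fun p => ℳ p.1 ⊗[k] 𝒩 p.2) (i, j) (⟨m, hm⟩ ⊗ₜ ⟨n, hn⟩) := by
  simp [decomposeEquiv, decomposeLinearEquiv_apply, decompose_of_mem _ hm,
    decompose_of_mem _ hn, ← lof_eq_of k, directSum_lof_tmul_lof]

def tensorScale (c : ι → κ → k) : M ⊗[k] N →ₗ[k] M ⊗[k] N :=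
  (decomposeEquiv ℳ 𝒩).symm.toLinearMap ∘ₗ
    (toModule k (ι × κ) _ fun p => c p.1 p.2 • lof k (ι × κ) (fun p => ℳ p.1 ⊗[k] 𝒩 p.2) p) ∘ₗ
    (decomposeEquiv ℳ 𝒩).toLinearMap

theorem tensorScale_tmul_of_mem (c : ι → κ → k) {i j} {m : M} {n : N} (hm : m ∈ ℳ i)
    (hn : n ∈ 𝒩 j) : tensorScale ℳ 𝒩 c (m ⊗ₜ n) = c i j • (m ⊗ₜ n) := by
  simp only [tensorScale, LinearMap.comp_apply, LinearEquiv.coe_coe]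
  rw [decomposeEquiv_tmul_of_mem ℳ 𝒩 hm hn, toModule_lof, LinearMap.smul_apply, map_smul,
    ← decomposeEquiv_tmul_of_mem ℳ 𝒩 hm hn, LinearEquiv.symm_apply_apply]

end TensorProduct

theorem map_smul_of_forall_homogeneous {k ι Λ Γ T M N : Type*} [CommSemiring k]
    [DecidableEq ι] [AddCommMonoid Λ] [Module k Λ] [AddCommMonoid Γ] [Module k Γ]
    (ℬ : ι → Submodule k Γ) [Decomposition ℬ] [Semiring T] [Module k T] (e : Λ ⊗[k] Γ ≃ₗ[k] T)
    [AddCommMonoid M] [Module T M] [AddCommMonoid N] [Module T N] (f : M →+ N)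
    (hf : ∀ (l : Λ) {d} {g : Γ}, g ∈ ℬ d → ∀ x, f (e (l ⊗ₜ g) • x) = e (l ⊗ₜ g) • f x)
    (y : T) (x : M) : f (y • x) = y • f x := by
  obtain ⟨z, rfl⟩ := e.surjective y
  induction z using induction_on_homogeneous_right ℬ with
  | zero => simp
  | add z z' hz hz' => rw [map_add, add_smul, map_add, hz, hz', add_smul]
  | tmul j l g hg => exact hf l hg x

section GradedModule

variable {k A Λ P : Type*} [CommSemiring k] [AddCancelCommMonoid A] [DecidableEq A]
  [Semiring Λ] [Algebra k Λ] (𝒜 : A → Submodule k Λ) [GradedAlgebra 𝒜]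
  [AddCommMonoid P] [Module k P] (𝓟 : A → Submodule k P) [Decomposition 𝓟]

def totalDegreeProj (d : A) : Λ ⊗[k] P →ₗ[k] Λ ⊗[k] P :=
  tensorScale 𝒜 𝓟 fun i j => if i + j = d then 1 else 0

theorem totalDegreeProj_smul_of_mem {c : A} {l : Λ} (hl : l ∈ 𝒜 c) (d : A) (x : Λ ⊗[k] P) :
    totalDegreeProj 𝒜 𝓟 (c + d) (l • x) = l • totalDegreeProj 𝒜 𝓟 d x := by
  induction x using induction_on_homogeneous 𝒜 𝓟 with
  | zero => simp
  | add x y hx hy => rw [smul_add, map_add, hx, hy, map_add, smul_add]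
  | tmul i j m n hm hn =>
    rw [smul_tmul', smul_eq_mul, totalDegreeProj, totalDegreeProj,
      tensorScale_tmul_of_mem _ _ _ (SetLike.mul_mem_graded hl hm) hn,
      tensorScale_tmul_of_mem _ _ _ hm hn, smul_comm l _ (m ⊗ₜ n), smul_tmul' l m n, smul_eq_mul]
    simp only [add_assoc, add_right_inj]

def homogenize (f : P →ₗ[k] Λ ⊗[k] P) : P →ₗ[k] Λ ⊗[k] P :=
  toModule k A _ (fun a => totalDegreeProj 𝒜 𝓟 a ∘ₗ f ∘ₗ (𝓟 a).subtype) ∘ₗ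
    (decomposeLinearEquiv 𝓟).toLinearMap

variable {𝒜 𝓟}

theorem homogenize_apply_of_mem (f : P →ₗ[k] Λ ⊗[k] P) {a : A} {p : P} (hp : p ∈ 𝓟 a) :
    homogenize 𝒜 𝓟 f p = totalDegreeProj 𝒜 𝓟 a (f p) := by
  rw [homogenize, LinearMap.comp_apply, LinearEquiv.coe_coe, decomposeLinearEquiv_apply,
    decompose_of_mem 𝓟 hp, ← lof_eq_of k, toModule_lof]
  rfl

variable [Module Λ P] [IsScalarTower k Λ P]

theorem tensorSmul_totalDegreeProj
    (h𝓟 : ∀ {a a'} (l : Λ) (p : P), l ∈ 𝒜 a → p ∈ 𝓟 a' → l • p ∈ 𝓟 (a + a'))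
    (d : A) (x : Λ ⊗[k] P) :
    tensorSmul k Λ P (totalDegreeProj 𝒜 𝓟 d x) = decompose 𝓟 (tensorSmul k Λ P x) d := by
  induction x using induction_on_homogeneous 𝒜 𝓟 with
  | zero => simp
  | add x y hx hy =>
    simp only [map_add, decompose_add, DirectSum.add_apply, Submodule.coe_add, hx, hy]
  | tmul i j m n hm hn =>
    rw [totalDegreeProj, tensorScale_tmul_of_mem _ _ _ hm hn, LinearMap.map_smul_of_tower,
      tensorSmul_tmul]
    by_cases h : i + j = d
    · rw [if_pos h, one_smul, decompose_of_mem_same 𝓟 (h ▸ h𝓟 m n hm hn)]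
    · rw [if_neg h, zero_smul, decompose_of_mem_ne 𝓟 (h𝓟 m n hm hn) h]

theorem tensorSmul_homogenize
    (h𝓟 : ∀ {a a'} (l : Λ) (p : P), l ∈ 𝒜 a → p ∈ 𝓟 a' → l • p ∈ 𝓟 (a + a'))
    {f : P →ₗ[k] Λ ⊗[k] P} (hf : ∀ p, tensorSmul k Λ P (f p) = p) (p : P) :
    tensorSmul k Λ P (homogenize 𝒜 𝓟 f p) = p := by
  induction p using Decomposition.inductionOn 𝓟 with
  | zero => simp
  | add p p' hp hp' => rw [map_add, map_add, hp, hp']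
  | homogeneous p =>
    rw [homogenize_apply_of_mem f p.2, tensorSmul_totalDegreeProj h𝓟, hf,
      decompose_of_mem_same 𝓟 p.2]

theorem homogenize_smul
    (h𝓟 : ∀ {a a'} (l : Λ) (p : P), l ∈ 𝒜 a → p ∈ 𝓟 a' → l • p ∈ 𝓟 (a + a'))
    (f : P →ₗ[Λ] Λ ⊗[k] P) (l : Λ) (p : P) :
    homogenize 𝒜 𝓟 (f.restrictScalars k) (l • p) = l • homogenize 𝒜 𝓟 (f.restrictScalars k) p := by
  induction l using Decomposition.inductionOn 𝒜 with
  | zero => rw [zero_smul, map_zero, zero_smul]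
  | add l l' hl hl' => rw [add_smul, map_add, hl, hl', add_smul]
  | homogeneous l =>
    induction p using Decomposition.inductionOn 𝓟 with
    | zero => rw [smul_zero, map_zero, smul_zero]
    | add p p' hp hp' => rw [smul_add, map_add, hp, hp', map_add, smul_add]
    | homogeneous p =>
      rw [homogenize_apply_of_mem _ (h𝓟 _ _ l.2 p.2), homogenize_apply_of_mem _ p.2,
        LinearMap.restrictScalars_apply, LinearMap.restrictScalars_apply, map_smul,
        totalDegreeProj_smul_of_mem 𝒜 𝓟 l.2]

variable (𝒜 𝓟) in
theorem exists_graded_tensorSmul_section [Module.Projective Λ P]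
    (h𝓟 : ∀ {a a'} (l : Λ) (p : P), l ∈ 𝒜 a → p ∈ 𝓟 a' → l • p ∈ 𝓟 (a + a')) :
    ∃ s : P →ₗ[Λ] Λ ⊗[k] P, (∀ p, tensorSmul k Λ P (s p) = p) ∧
      ∀ a p, p ∈ 𝓟 a → s p ∈ LinearMap.range (totalDegreeProj 𝒜 𝓟 a) := by
  obtain ⟨f, hf⟩ := exists_tensorSmul_section (R := k) (S := Λ) (M := P)
  let s : P →ₗ[Λ] Λ ⊗[k] P :=
    { toFun := homogenize 𝒜 𝓟 (f.restrictScalars k)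
      map_add' := map_add _
      map_smul' := homogenize_smul h𝓟 f }
  exact ⟨s, tensorSmul_homogenize h𝓟 hf, fun a p hp =>
    ⟨f p, (homogenize_apply_of_mem (f.restrictScalars k) hp).symm⟩⟩

end GradedModule

section TwistedTensorProduct

variable {k A B Λ Γ T P Q : Type*} [CommSemiring k] [AddCommMonoid B]
  [DecidableEq A] [DecidableEq B] [Semiring Λ] [Algebra k Λ] [Semiring Γ] [Algebra k Γ]
  (ℬ : B → Submodule k Γ) [GradedAlgebra ℬ]
  (t : A → B → kˣ) [Semiring T] [Algebra k T] (e : Λ ⊗[k] Γ ≃ₗ[k] T)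
  [AddCommMonoid P] [Module k P] (𝓟 : A → Submodule k P) [Decomposition 𝓟]
  [AddCommMonoid Q] [Module k Q]

def twistedComm : P ⊗[k] Γ →ₗ[k] Γ ⊗[k] P :=
  (TensorProduct.comm k P Γ).toLinearMap ∘ₗ tensorScale 𝓟 ℬ fun a b => ((t a b)⁻¹ : kˣ)

def twistedShuffle : (Λ ⊗[k] P) ⊗[k] (Γ ⊗[k] Q) →ₗ[k] T ⊗[k] (P ⊗[k] Q) :=
  e.toLinearMap.rTensor _ ∘ₗ (TensorProduct.assoc k Λ Γ (P ⊗[k] Q)).symm.toLinearMap ∘ₗ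
    ((TensorProduct.assoc k Γ P Q).toLinearMap ∘ₗ (twistedComm ℬ t 𝓟).rTensor Q ∘ₗ
      (TensorProduct.assoc k P Γ Q).symm.toLinearMap).lTensor Λ ∘ₗ
    (TensorProduct.assoc k Λ P (Γ ⊗[k] Q)).toLinearMap

variable {ℬ t e 𝓟}

theorem twistedShuffle_tmul_of_mem {a : A} {b : B} (l : Λ) {p : P} {γ : Γ} (q : Q)
    (hp : p ∈ 𝓟 a) (hγ : γ ∈ ℬ b) :
    twistedShuffle ℬ t e 𝓟 ((l ⊗ₜ p) ⊗ₜ (γ ⊗ₜ q)) = (t a b)⁻¹ • (e (l ⊗ₜ γ) ⊗ₜ (p ⊗ₜ q)) := by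
  simp [twistedShuffle, twistedComm, tensorScale_tmul_of_mem 𝓟 ℬ _ hp hγ, Units.smul_def,
    smul_tmul, tmul_smul]

section Action

variable [Module Λ P] [IsScalarTower k Λ P] [Module Γ Q] [IsScalarTower k Γ Q]
  [Module T (P ⊗[k] Q)] [IsScalarTower k T (P ⊗[k] Q)]

theorem tensorSmul_twistedShuffle
    (hact : ∀ (ap : A) (bg : B) (l : Λ) (g : Γ) (p : P) (q : Q), g ∈ ℬ bg → p ∈ 𝓟 ap →
      e (l ⊗ₜ g) • (p ⊗ₜ q : P ⊗[k] Q) = (t ap bg : k) • ((l • p) ⊗ₜ (g • q)))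
    (u : Λ ⊗[k] P) (v : Γ ⊗[k] Q) :
    tensorSmul k T (P ⊗[k] Q) (twistedShuffle ℬ t e 𝓟 (u ⊗ₜ v)) =
      tensorSmul k Λ P u ⊗ₜ tensorSmul k Γ Q v := by
  induction u using induction_on_homogeneous_right 𝓟 with
  | zero => simp
  | add u u' hu hu' => rw [add_tmul, map_add, map_add, hu, hu', map_add, add_tmul]
  | tmul a l p hp =>
    induction v using induction_on_homogeneous_left ℬ with
    | zero => simp
    | add v v' hv hv' => rw [tmul_add, map_add, map_add, hv, hv', map_add, tmul_add]
    | tmul b γ q hγ =>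
      rw [twistedShuffle_tmul_of_mem l q hp hγ, LinearMap.map_smul_of_tower, tensorSmul_tmul,
        hact a b l γ p q hγ hp, ← Units.smul_def, inv_smul_smul, tensorSmul_tmul, tensorSmul_tmul]

theorem tensorSmul_twistedShuffle_map
    (hact : ∀ (ap : A) (bg : B) (l : Λ) (g : Γ) (p : P) (q : Q), g ∈ ℬ bg → p ∈ 𝓟 ap →
      e (l ⊗ₜ g) • (p ⊗ₜ q : P ⊗[k] Q) = (t ap bg : k) • ((l • p) ⊗ₜ (g • q)))
    {s : P →ₗ[Λ] Λ ⊗[k] P} (hs : ∀ p, tensorSmul k Λ P (s p) = p)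
    {τ : Q →ₗ[Γ] Γ ⊗[k] Q} (hτ : ∀ q, tensorSmul k Γ Q (τ q) = q) (x : P ⊗[k] Q) :
    tensorSmul k T (P ⊗[k] Q)
      (twistedShuffle ℬ t e 𝓟 (map (s.restrictScalars k) (τ.restrictScalars k) x)) = x := by
  induction x using TensorProduct.induction_on with
  | zero => simp
  | add x y hx hy => rw [map_add, map_add, map_add, hx, hy]
  | tmul p q =>
    rw [map_tmul, tensorSmul_twistedShuffle hact, LinearMap.restrictScalars_apply,
      LinearMap.restrictScalars_apply, hs, hτ]

end Action

variable [AddCancelCommMonoid A] {𝒜 : A → Submodule k Λ} [GradedAlgebra 𝒜]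

/-- The twist `t⟨|p|,|γ|⟩⁻¹` built into `twistedShuffle` converts the twist of the product of `T`
into `t⟨a,d⟩`, provided `x` has total degree `a`. -/
theorem smul_twistedShuffle
    (ht₁ : ∀ a a' b, t (a + a') b = t a b * t a' b)
    (ht₂ : ∀ a b b', t a (b + b') = t a b * t a b')
    (hemul : ∀ {a b} (x x' : Λ) (y y' : Γ), x' ∈ 𝒜 a → y ∈ ℬ b →
      e (x ⊗ₜ y) * e (x' ⊗ₜ y') = (t a b : k) • e ((x * x') ⊗ₜ (y * y')))
    {d : B} (l : Λ) {g : Γ} (hg : g ∈ ℬ d)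
    {a : A} {x : Λ ⊗[k] P} (hx : x ∈ LinearMap.range (totalDegreeProj 𝒜 𝓟 a)) (v : Γ ⊗[k] Q) :
    e (l ⊗ₜ g) • twistedShuffle ℬ t e 𝓟 (x ⊗ₜ v) =
      (t a d : k) • twistedShuffle ℬ t e 𝓟 ((l • x) ⊗ₜ (g • v)) := by
  rw [← Units.smul_def]
  obtain ⟨y, rfl⟩ := hx
  induction y using induction_on_homogeneous 𝒜 𝓟 with
  | zero => simp
  | add y y' hy hy' => simp only [map_add, add_tmul, smul_add, hy, hy']
  | tmul i j m n hm hn =>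
    rw [totalDegreeProj, tensorScale_tmul_of_mem _ _ _ hm hn]
    split_ifs with h
    · subst h
      rw [one_smul]
      induction v using induction_on_homogeneous_left ℬ with
      | zero => simp
      | add v v' hv hv' => simp only [tmul_add, smul_add, map_add, hv, hv']
      | tmul d' γ q hγ =>
        have hscalar : (t j d')⁻¹ * t i d = t (i + j) d * (t j (d + d'))⁻¹ := by
          rw [ht₁, ht₂, mul_inv, mul_assoc, mul_inv_cancel_left, mul_comm]
        have hlm : l • (m ⊗ₜ[k] n) = (l * m) ⊗ₜ n := smul_tmul' l m n
        have hgγ : g • (γ ⊗ₜ[k] q) = (g * γ) ⊗ₜ q := smul_tmul' g γ q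
        rw [twistedShuffle_tmul_of_mem m q hn hγ, hlm, hgγ,
          twistedShuffle_tmul_of_mem _ q hn (SetLike.mul_mem_graded hg hγ), smul_comm,
          smul_tmul' (e (l ⊗ₜ g)), smul_eq_mul, hemul l m g γ hm hg, ← smul_tmul',
          ← Units.smul_def, smul_smul, smul_smul, hscalar]
    · simp

variable [Module Λ P] [IsScalarTower k Λ P] [Module Γ Q] [IsScalarTower k Γ Q]
  [Module T (P ⊗[k] Q)]

theorem twistedShuffle_map_smul
    (ht₁ : ∀ a a' b, t (a + a') b = t a b * t a' b)
    (ht₂ : ∀ a b b', t a (b + b') = t a b * t a b')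
    (hemul : ∀ {a b} (x x' : Λ) (y y' : Γ), x' ∈ 𝒜 a → y ∈ ℬ b →
      e (x ⊗ₜ y) * e (x' ⊗ₜ y') = (t a b : k) • e ((x * x') ⊗ₜ (y * y')))
    (hact : ∀ (ap : A) (bg : B) (l : Λ) (g : Γ) (p : P) (q : Q), g ∈ ℬ bg → p ∈ 𝓟 ap →
      e (l ⊗ₜ g) • (p ⊗ₜ q : P ⊗[k] Q) = (t ap bg : k) • ((l • p) ⊗ₜ (g • q)))
    {s : P →ₗ[Λ] Λ ⊗[k] P} (hs : ∀ a p, p ∈ 𝓟 a → s p ∈ LinearMap.range (totalDegreeProj 𝒜 𝓟 a))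
    (τ : Q →ₗ[Γ] Γ ⊗[k] Q) {d : B} (l : Λ) {g : Γ} (hg : g ∈ ℬ d) (x : P ⊗[k] Q) :
    twistedShuffle ℬ t e 𝓟 (map (s.restrictScalars k) (τ.restrictScalars k) (e (l ⊗ₜ g) • x)) =
      e (l ⊗ₜ g) • twistedShuffle ℬ t e 𝓟 (map (s.restrictScalars k) (τ.restrictScalars k) x) := by
  induction x using induction_on_homogeneous_left 𝓟 with
  | zero => simp
  | add x y hx hy => rw [smul_add, map_add, map_add, hx, hy, map_add, map_add, smul_add]
  | tmul a p q hp =>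
    rw [hact a d l g p q hg hp, map_smul, map_smul, map_tmul, map_tmul,
      LinearMap.restrictScalars_apply, LinearMap.restrictScalars_apply, map_smul, map_smul]
    exact (smul_twistedShuffle ht₁ ht₂ hemul l hg (hs a p hp) _).symm

end TwistedTensorProduct

end

theorem stmt4_general {k A B Λ Γ T P Q : Type} [Field k]
    [AddCommGroup A] [AddCommGroup B] [DecidableEq A] [DecidableEq B]
    [Ring Λ] [Algebra k Λ] [Ring Γ] [Algebra k Γ]
    (𝒜 : A → Submodule k Λ) (ℬ : B → Submodule k Γ)
    [GradedAlgebra 𝒜] [GradedAlgebra ℬ]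
    (t : A → B → kˣ)
    (ht₁ : ∀ a a' b, t (a + a') b = t a b * t a' b)
    (ht₂ : ∀ a b b', t a (b + b') = t a b * t a b')
    [Ring T] [Algebra k T] (e : (Λ ⊗[k] Γ) ≃ₗ[k] T)
    (hemul : ∀ {a b} (x x' : Λ) (y y' : Γ), x' ∈ 𝒜 a → y ∈ ℬ b →
      e (x ⊗ₜ y) * e (x' ⊗ₜ y') = (t a b : k) • e ((x * x') ⊗ₜ (y * y')))
    -- P a finitely generated graded projective Λ-module
    [AddCommGroup P] [Module k P] [Module Λ P] [IsScalarTower k Λ P]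
    (𝓟 : A → Submodule k P) [DirectSum.Decomposition 𝓟]
    (h𝓟 : ∀ {a a'} (l : Λ) (p : P), l ∈ 𝒜 a → p ∈ 𝓟 a' → l • p ∈ 𝓟 (a + a'))
    [Module.Projective Λ P]
    -- Q a finitely generated graded projective Γ-module
    [AddCommGroup Q] [Module k Q] [Module Γ Q] [IsScalarTower k Γ Q]
    [Module.Projective Γ Q]
    -- the twisted T-module structure on P ⊗[k] Q
    [Module T (P ⊗[k] Q)] [IsScalarTower k T (P ⊗[k] Q)]
    (hact : ∀ (ap : A) (bg : B) (l : Λ) (g : Γ) (p : P) (q : Q), g ∈ ℬ bg → p ∈ 𝓟 ap →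
      e (l ⊗ₜ g) • (p ⊗ₜ q : P ⊗[k] Q) = (t ap bg : k) • ((l • p) ⊗ₜ (g • q))) :
    Module.Projective T (P ⊗[k] Q) := by
  obtain ⟨s, hs, hs_deg⟩ := exists_graded_tensorSmul_section 𝒜 𝓟 h𝓟
  obtain ⟨τ, hτ⟩ := exists_tensorSmul_section (R := k) (S := Γ) (M := Q)
  let S := twistedShuffle ℬ t e 𝓟 ∘ₗ map (s.restrictScalars k) (τ.restrictScalars k)
  have hS : ∀ (y : T) x, S (y • x) = y • S x :=
    map_smul_of_forall_homogeneous ℬ e S.toAddMonoidHom fun l _ _ hg =>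
      twistedShuffle_map_smul ht₁ ht₂ hemul hact hs_deg τ l hg
  exact .of_tensorSmul_section (R := k) { S with map_smul' := hS }
    (tensorSmul_twistedShuffle_map hact hs hτ)

/-- If `P` is a finitely generated graded projective `Λ`-module and `Q` a
finitely generated graded projective `Γ`-module, then the twisted tensor product `P ⊗ᵗ Q`
(i.e. `P ⊗[k] Q` with the `T = Λ ⊗ᵗ Γ`-action given on homogeneous elements by
`(λ ⊗ γ)·(p ⊗ q) = t⟨|p|,|γ|⟩ λp ⊗ γq`) is a (graded) projective `T`-module. -/
theorem stmt4 {k A B Λ Γ T P Q : Type} [Field k]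
    [AddCommGroup A] [AddCommGroup B] [DecidableEq A] [DecidableEq B]
    [Ring Λ] [Algebra k Λ] [Ring Γ] [Algebra k Γ]
    (𝒜 : A → Submodule k Λ) (ℬ : B → Submodule k Γ)
    [GradedAlgebra 𝒜] [GradedAlgebra ℬ]
    (t : A → B → kˣ)
    (ht₁ : ∀ a a' b, t (a + a') b = t a b * t a' b)
    (ht₂ : ∀ a b b', t a (b + b') = t a b * t a b')
    [Ring T] [Algebra k T] (e : (Λ ⊗[k] Γ) ≃ₗ[k] T)
    (he1 : e (1 ⊗ₜ 1) = 1)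
    (hemul : ∀ {a b} (x x' : Λ) (y y' : Γ), x' ∈ 𝒜 a → y ∈ ℬ b →
      e (x ⊗ₜ y) * e (x' ⊗ₜ y') = (t a b : k) • e ((x * x') ⊗ₜ (y * y')))
    -- P a finitely generated graded projective Λ-module
    [AddCommGroup P] [Module k P] [Module Λ P] [IsScalarTower k Λ P]
    (𝓟 : A → Submodule k P) [DirectSum.Decomposition 𝓟]
    (h𝓟 : ∀ {a a'} (l : Λ) (p : P), l ∈ 𝒜 a → p ∈ 𝓟 a' → l • p ∈ 𝓟 (a + a'))
    [Module.Projective Λ P] [Module.Finite Λ P]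
    -- Q a finitely generated graded projective Γ-module
    [AddCommGroup Q] [Module k Q] [Module Γ Q] [IsScalarTower k Γ Q]
    (𝓠 : B → Submodule k Q) [DirectSum.Decomposition 𝓠]
    (h𝓠 : ∀ {b b'} (g : Γ) (q : Q), g ∈ ℬ b → q ∈ 𝓠 b' → g • q ∈ 𝓠 (b + b'))
    [Module.Projective Γ Q] [Module.Finite Γ Q]
    -- the twisted T-module structure on P ⊗[k] Q
    [Module T (P ⊗[k] Q)] [IsScalarTower k T (P ⊗[k] Q)]
    (hact : ∀ (ap : A) (bg : B) (l : Λ) (g : Γ) (p : P) (q : Q), g ∈ ℬ bg → p ∈ 𝓟 ap →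
      e (l ⊗ₜ g) • (p ⊗ₜ q : P ⊗[k] Q) = (t ap bg : k) • ((l • p) ⊗ₜ (g • q))) :
    Module.Projective T (P ⊗[k] Q) :=
  stmt4_general 𝒜 ℬ t ht₁ ht₂ e hemul 𝓟 h𝓟 hact
end

section
/- For graded modules M, M' over Λ and N, N' over Γ, the natural map grHom_Λ(M, M') ⊗_k grHom_Γ(N, N') → grHom_{Λ⊗_k^t Γ}(M ⊗_k^t N, M' ⊗_k^t N'), sending φ ⊗ ψ to the map m ⊗ n ↦ φ(m) ⊗ ψ(n), is a k-linear isomorphism when M and N are finitely generated. -/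
open TensorProduct

/-- The `k`-submodule of degree-preserving `R`-linear maps between two `G`-graded
`R`-modules (viewed inside the space of `k`-linear maps). -/
def grHom {k : Type} [Field k] (R : Type) [Ring R] [Algebra k R]
    {G : Type} [AddCommGroup G]
    {M M' : Type} [AddCommGroup M] [Module k M] [Module R M]
    [AddCommGroup M'] [Module k M'] [Module R M'] [SMulCommClass R k M']
    (𝓜 : G → Submodule k M) (𝓜' : G → Submodule k M') :
    Submodule k (M →ₗ[k] M') where
  carrier := {f | (∀ (r : R) (m : M), f (r • m) = r • f m) ∧
    ∀ g : G, ∀ m ∈ 𝓜 g, f m ∈ 𝓜' g}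
  add_mem' := fun hf hg => ⟨fun r m => by simp [hf.1, hg.1, smul_add],
    fun a m hm => Submodule.add_mem _ (hf.2 a m hm) (hg.2 a m hm)⟩
  zero_mem' := ⟨fun r m => by simp, fun a m hm => Submodule.zero_mem _⟩
  smul_mem' := fun c f hf => ⟨fun r m => by simp [hf.1, smul_comm],
    fun a m hm => Submodule.smul_mem _ _ (hf.2 a m hm)⟩

/-- The grading on `M ⊗[k] N`: the `(a,b)`-component is spanned by the `m ⊗ n` with
`m` of degree `a` and `n` of degree `b`. -/
def tensorGrading {k : Type} [Field k] {A B M N : Type}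
    [AddCommGroup M] [Module k M] [AddCommGroup N] [Module k N]
    (ℳ : A → Submodule k M) (𝒩 : B → Submodule k N) (p : A × B) :
    Submodule k (M ⊗[k] N) :=
  Submodule.span k {z : M ⊗[k] N | ∃ m n, m ∈ ℳ p.1 ∧ n ∈ 𝒩 p.2 ∧ z = m ⊗ₜ n}

/-!
A degree-preserving `k`-linear map `F : M ⊗ N → M' ⊗ N'` is `Λ ⊗ᵗ Γ`-linear iff it commutes with
every `l • ⊗ γ •`: on homogeneous tensors `e (l ⊗ γ)` acts on source and target as the same unit
`t a b` times `l • ⊗ γ •`. So the twist disappears, and `F` intertwines, in each tensor factor,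
the ring action and the projections onto the graded components.

Over a field, `Y ⊗ Hom(X, Z) → Hom(X, Y ⊗ Z)` is injective, and when `X` is finitely generated
over `R` its image contains every `h` intertwining a family of operators that includes the
`R`-action: in a basis of `Y` the coordinates of `h x` vanish outside the finitely many indices
occurring for the generators, and each coordinate of `h` is again an intertwiner. Applied to
`n ↦ F (m ⊗ n)` and then to the resulting map `M → M' ⊗ Hom(N, N')`, this writes `F` as
`∑ fᵢ ⊗ gᵢ` with `fᵢ`, `gᵢ` linear and degree-preserving.
-/

section HomTensor

variable {k X Y Z : Type*} [Field k] [AddCommGroup X] [Module k X] [AddCommGroup Y] [Module k Y]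
  [AddCommGroup Z] [Module k Z]

theorem lTensorHomToHomLTensor_injective :
    Function.Injective (lTensorHomToHomLTensor (.id k) X Y Z) := by
  classical
  let b := Module.Free.chooseBasis k Y
  have hb : ∀ (u : Y ⊗[k] (X →ₗ[k] Z)) i x, equivFinsuppOfBasisLeft b u i x =
      equivFinsuppOfBasisLeft b (lTensorHomToHomLTensor (.id k) X Y Z u x) i := by
    intro u i x
    induction u using TensorProduct.induction_on <;> simp_all
  refine (injective_iff_map_eq_zero _).mpr fun u hu => (equivFinsuppOfBasisLeft b).injective ?_
  ext i x
  simp [hb, hu]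

theorem rTensorHomToHomRTensor_injective :
    Function.Injective (rTensorHomToHomRTensor (.id k) X Z Y) := by
  classical
  let b := Module.Free.chooseBasis k Y
  have hb : ∀ (u : (X →ₗ[k] Z) ⊗[k] Y) i x, equivFinsuppOfBasisRight b u i x =
      equivFinsuppOfBasisRight b (rTensorHomToHomRTensor (.id k) X Z Y u x) i := by
    intro u i x
    induction u using TensorProduct.induction_on <;> simp_all
  refine (injective_iff_map_eq_zero _).mpr fun u hu => (equivFinsuppOfBasisRight b).injective ?_
  ext i x
  simp [hb, hu]

end HomTensor

section Intertwiners

variable {k ι X Y Z : Type*} [Field k] [AddCommGroup X] [Module k X] [AddCommGroup Y]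
  [Module k Y] [AddCommGroup Z] [Module k Z]

def intertwiners (σ : ι → Module.End k X) (τ : ι → Module.End k Z) :
    Submodule k (X →ₗ[k] Z) where
  carrier := {g | ∀ i, g ∘ₗ σ i = τ i ∘ₗ g}
  add_mem' hf hg i := by simp only [LinearMap.add_comp, LinearMap.comp_add, hf i, hg i]
  zero_mem' i := by simp
  smul_mem' c g hg i := by simp only [LinearMap.smul_comp, LinearMap.comp_smul, hg i]

variable {R : Type*} [Ring R] [Module R X] [Module.Finite R X]
  {σ : ι → Module.End k X} {τ : ι → Module.End k Z}

theorem mem_range_lTensorHomToHomLTensor_of_intertwines (hσ : ∀ r : R, ∃ i, ∀ x, σ i x = r • x)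
    {h : X →ₗ[k] Y ⊗[k] Z} (hh : ∀ i, h ∘ₗ σ i = (τ i).lTensor Y ∘ₗ h) :
    h ∈ LinearMap.range
      (lTensorHomToHomLTensor (.id k) X Y Z ∘ₗ (intertwiners σ τ).subtype.lTensor Y) := by
  classical
  let b := Module.Free.chooseBasis k Y
  let E := equivFinsuppOfBasisLeft (N := Z) b
  have hE : ∀ j (φ : Module.End k Z) u, E (φ.lTensor Y u) j = φ (E u j) := by
    intro j φ u
    induction u using TensorProduct.induction_on <;> simp_all [E]
  let c : _ → X →ₗ[k] Z := fun j => Finsupp.lapply j ∘ₗ E.toLinearMap ∘ₗ h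
  have hc : ∀ j i, c j ∘ₗ σ i = τ i ∘ₗ c j := by
    intro j i
    ext x
    simp [c, ← LinearMap.comp_apply h (σ i), hh i, hE]
  obtain ⟨s, hs⟩ := Module.Finite.fg_top (R := R) (M := X)
  let S := s.biUnion fun x => (E (h x)).support
  have hS : ∀ x, ∀ j ∉ S, E (h x) j = 0 := by
    intro x
    have hx : x ∈ Submodule.span R (s : Set X) := hs ▸ Submodule.mem_top
    induction hx using Submodule.span_induction with
    | mem x hx =>
        intro j hj
        exact Finsupp.notMem_support_iff.mp
          fun hj' => hj (Finset.subset_biUnion_of_mem (fun x => (E (h x)).support) hx hj')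
    | zero => simp
    | add x y _ _ hx hy => intro j hj; simp [hx j hj, hy j hj]
    | smul r x _ hx =>
        intro j hj
        obtain ⟨i, hi⟩ := hσ r
        rw [← hi, ← LinearMap.comp_apply h, hh i, LinearMap.comp_apply, hE, hx j hj, map_zero]
  refine ⟨∑ j ∈ S, b j ⊗ₜ ⟨c j, hc j⟩, ?_⟩
  ext x
  conv_rhs => rw [← E.symm_apply_apply (h x), equivFinsuppOfBasisLeft_symm_apply,
    Finsupp.sum_of_support_subset _ (Finset.coe_subset.mp (Finsupp.support_subset_iff.mpr (hS x)))
      _ (by simp)]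
  simp [c]

theorem mem_range_rTensorHomToHomRTensor_of_intertwines (hσ : ∀ r : R, ∃ i, ∀ x, σ i x = r • x)
    {h : X →ₗ[k] Z ⊗[k] Y} (hh : ∀ i, h ∘ₗ σ i = (τ i).rTensor Y ∘ₗ h) :
    h ∈ LinearMap.range
      (rTensorHomToHomRTensor (.id k) X Z Y ∘ₗ (intertwiners σ τ).subtype.rTensor Y) := by
  obtain ⟨u, hu⟩ := mem_range_lTensorHomToHomLTensor_of_intertwines hσ (τ := τ)
    (h := (TensorProduct.comm k Z Y).toLinearMap ∘ₗ h) fun i => by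
      rw [LinearMap.comp_assoc, hh i, ← LinearMap.comp_assoc, ← LinearMap.lTensor_comp_comm,
        LinearMap.comp_assoc]
  refine ⟨TensorProduct.comm k _ _ u, ?_⟩
  ext x
  apply (TensorProduct.comm k Z Y).injective
  rw [← LinearEquiv.coe_coe, ← LinearMap.comp_apply _ h, ← hu]
  clear hu
  induction u using TensorProduct.induction_on <;> simp_all

end Intertwiners

section HomTensorHom

variable {k M N M' N' : Type*} [Field k] [AddCommGroup M] [Module k M] [AddCommGroup N]
  [Module k N] [AddCommGroup M'] [Module k M'] [AddCommGroup N'] [Module k N']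

theorem homTensorHomMap_injective : Function.Injective (homTensorHomMap (.id k) M N M' N') := by
  have hfactor : ∀ v m n, homTensorHomMap (.id k) M N M' N' v (m ⊗ₜ n) =
      lTensorHomToHomLTensor (.id k) N M' N' (rTensorHomToHomRTensor (.id k) M M' _ v m) n := by
    intro v m n
    induction v using TensorProduct.induction_on <;> simp_all
  intro v w hvw
  apply rTensorHomToHomRTensor_injective
  ext m : 1
  apply lTensorHomToHomLTensor_injective
  ext n
  rw [← hfactor, ← hfactor, hvw]

variable {ι κ R S : Type*} [Ring R] [Module R M] [Module.Finite R M] [Ring S] [Module S N]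
  [Module.Finite S N] {σ : ι → Module.End k M} {τ : ι → Module.End k M'}
  {σ' : κ → Module.End k N} {τ' : κ → Module.End k N'}

theorem mem_range_homTensorHomMap_of_intertwines (hσ : ∀ r : R, ∃ i, ∀ m, σ i m = r • m)
    (hσ' : ∀ s : S, ∃ j, ∀ n, σ' j n = s • n) {F : M ⊗[k] N →ₗ[k] M' ⊗[k] N'}
    (hF : ∀ i, F ∘ₗ (σ i).rTensor N = (τ i).rTensor N' ∘ₗ F)
    (hF' : ∀ j, F ∘ₗ (σ' j).lTensor M = (τ' j).lTensor M' ∘ₗ F) :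
    F ∈ LinearMap.range (homTensorHomMap (.id k) M N M' N' ∘ₗ
      map (intertwiners σ τ).subtype (intertwiners σ' τ').subtype) := by
  let Ψ := lTensorHomToHomLTensor (.id k) N M' N' ∘ₗ (intertwiners σ' τ').subtype.lTensor M'
  have hΨ : Function.Injective Ψ := lTensorHomToHomLTensor_injective.comp
    (Module.Flat.lTensor_preserves_injective_linearMap _ (Submodule.injective_subtype _))
  have hΨ_rTensor : ∀ (φ : Module.End k M') w n, Ψ (φ.rTensor _ w) n = φ.rTensor N' (Ψ w n) := by
    intro φ w n
    induction w using TensorProduct.induction_on <;> simp_all [Ψ]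
  have hcurry : ∀ m, curry F m ∈ LinearMap.range Ψ := fun m =>
    mem_range_lTensorHomToHomLTensor_of_intertwines hσ' fun j => by
      ext n
      exact LinearMap.congr_fun (hF' j) (m ⊗ₜ n)
  let G := (LinearEquiv.ofInjective Ψ hΨ).symm.toLinearMap ∘ₗ (curry F).codRestrict _ hcurry
  have hG : ∀ m, Ψ (G m) = curry F m := fun m => LinearEquiv.ofInjective_symm_apply (h := hΨ) _ _
  have hGσ : ∀ i, G ∘ₗ σ i = (τ i).rTensor _ ∘ₗ G := by
    intro i
    ext m : 1
    apply hΨ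
    ext n
    simp only [LinearMap.comp_apply, hG, hΨ_rTensor, curry_apply]
    exact LinearMap.congr_fun (hF i) (m ⊗ₜ n)
  obtain ⟨v, hv⟩ := mem_range_rTensorHomToHomRTensor_of_intertwines hσ hGσ
  refine ⟨v, TensorProduct.ext' fun m n => ?_⟩
  rw [← curry_apply F m n, ← hG, ← hv]
  clear hv
  induction v using TensorProduct.induction_on <;> simp_all [Ψ]

end HomTensorHom

section TensorGrading

variable {k A B M N : Type} [Field k] [AddCommGroup M] [Module k M] [AddCommGroup N] [Module k N]
  (ℳ : A → Submodule k M) (𝒩 : B → Submodule k N)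

theorem tmul_mem_tensorGrading {a : A} {b : B} {m : M} {n : N} (hm : m ∈ ℳ a) (hn : n ∈ 𝒩 b) :
    m ⊗ₜ n ∈ tensorGrading ℳ 𝒩 (a, b) :=
  Submodule.subset_span ⟨m, n, hm, hn, rfl⟩

theorem map_apply_of_mem_tensorGrading {φ : Module.End k M} {ψ : Module.End k N} {a : A} {b : B}
    {c d : k} (hφ : ∀ m ∈ ℳ a, φ m = c • m) (hψ : ∀ n ∈ 𝒩 b, ψ n = d • n) {z : M ⊗[k] N}
    (hz : z ∈ tensorGrading ℳ 𝒩 (a, b)) : map φ ψ z = (c * d) • z := by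
  refine LinearMap.eqOn_span (g := (c * d) • LinearMap.id) ?_ hz
  rintro _ ⟨m, n, hm, hn, rfl⟩
  rw [LinearMap.smul_apply, LinearMap.id_apply, map_tmul, hφ m hm, hψ n hn, smul_tmul_smul]

end TensorGrading

section Graded

variable {k G M : Type} [Field k] [DecidableEq G] [AddCommGroup M] [Module k M]
  (ℳ : G → Submodule k M) [DirectSum.Decomposition ℳ]

def gradedProj (a : G) : Module.End k M :=
  (ℳ a).subtype ∘ₗ DirectSum.component k G (fun a => ℳ a) a ∘ₗ
    (DirectSum.decomposeLinearEquiv ℳ).toLinearMap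

theorem gradedProj_apply (a : G) (m : M) : gradedProj ℳ a m = DirectSum.decompose ℳ m a := rfl

theorem gradedProj_mem (a : G) (m : M) : gradedProj ℳ a m ∈ ℳ a := (DirectSum.decompose ℳ m a).2

theorem gradedProj_of_mem {a a' : G} {m : M} (hm : m ∈ ℳ a') :
    gradedProj ℳ a m = (if a' = a then 1 else 0 : k) • m := by
  split_ifs with h
  · rw [one_smul, gradedProj_apply, ← h, DirectSum.decompose_of_mem_same ℳ hm]
  · rw [zero_smul, gradedProj_apply, DirectSum.decompose_of_mem_ne ℳ hm h]

def gradedOperators (R : Type) [Ring R] [Module R M] [SMulCommClass R k M] :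
    R ⊕ G → Module.End k M :=
  Sum.elim (Module.toModuleEnd k M) (gradedProj ℳ)

theorem intertwiners_gradedOperators_le_grHom [AddCommGroup G] {M' : Type} [AddCommGroup M']
    [Module k M'] (ℳ' : G → Submodule k M') [DirectSum.Decomposition ℳ'] (R : Type) [Ring R]
    [Algebra k R] [Module R M] [SMulCommClass R k M] [Module R M'] [SMulCommClass R k M'] :
    intertwiners (gradedOperators ℳ R) (gradedOperators ℳ' R) ≤ grHom R ℳ ℳ' := by
  intro f hf
  refine ⟨fun r m => LinearMap.congr_fun (hf (.inl r)) m, fun a m hm => ?_⟩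
  have hfa := LinearMap.congr_fun (hf (.inr a)) m
  simp only [gradedOperators, Sum.elim_inr, LinearMap.comp_apply, gradedProj_of_mem ℳ hm,
    if_pos, one_smul] at hfa
  exact hfa ▸ gradedProj_mem ℳ' a (f m)

variable {H N : Type} [DecidableEq H] [AddCommGroup N] [Module k N] (𝒩 : H → Submodule k N)
  [DirectSum.Decomposition 𝒩]

theorem TensorProduct.ext_homogeneous {P : Type} [AddCommGroup P] [Module k P]
    {f g : M ⊗[k] N →ₗ[k] P}
    (h : ∀ a b, ∀ m ∈ ℳ a, ∀ n ∈ 𝒩 b, f (m ⊗ₜ n) = g (m ⊗ₜ n)) : f = g := by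
  refine TensorProduct.ext' fun m n => ?_
  induction m using DirectSum.Decomposition.inductionOn ℳ with
  | zero => simp
  | add m m' hm hm' => simp only [add_tmul, map_add, hm, hm']
  | homogeneous m =>
    induction n using DirectSum.Decomposition.inductionOn 𝒩 with
    | zero => simp
    | add n n' hn hn' => simp only [tmul_add, map_add, hn, hn']
    | homogeneous n => exact h _ _ m m.2 n n.2

theorem comp_map_eq_map_comp_of_graded {M' N' : Type} [AddCommGroup M'] [Module k M']
    [AddCommGroup N'] [Module k N'] (ℳ' : G → Submodule k M') (𝒩' : H → Submodule k N')
    {F : M ⊗[k] N →ₗ[k] M' ⊗[k] N'}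
    (hF : ∀ p, ∀ z ∈ tensorGrading ℳ 𝒩 p, F z ∈ tensorGrading ℳ' 𝒩' p)
    {φ : Module.End k M} {φ' : Module.End k M'} {ψ : Module.End k N} {ψ' : Module.End k N'}
    (c : G → k) (d : H → k)
    (hφ : ∀ a, ∀ m ∈ ℳ a, φ m = c a • m) (hφ' : ∀ a, ∀ m ∈ ℳ' a, φ' m = c a • m)
    (hψ : ∀ b, ∀ n ∈ 𝒩 b, ψ n = d b • n) (hψ' : ∀ b, ∀ n ∈ 𝒩' b, ψ' n = d b • n) :
    F ∘ₗ map φ ψ = map φ' ψ' ∘ₗ F := by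
  refine TensorProduct.ext_homogeneous ℳ 𝒩 fun a b m hm n hn => ?_
  have hmn := tmul_mem_tensorGrading ℳ 𝒩 hm hn
  rw [LinearMap.comp_apply, LinearMap.comp_apply,
    map_apply_of_mem_tensorGrading ℳ 𝒩 (hφ a) (hψ b) hmn, map_smul,
    map_apply_of_mem_tensorGrading ℳ' 𝒩' (hφ' a) (hψ' b) (hF _ _ hmn)]

end Graded

section Twisted

variable {k A B Λ Γ T : Type} [Field k]
  [Ring Λ] [Algebra k Λ] [Ring Γ] [Algebra k Γ] [Ring T] [Algebra k T]

/-- The `Λ ⊗ᵗ Γ`-module structure of `M ⊗ᵗ N`, with `T` identified with `Λ ⊗ Γ` through `e`. -/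
def IsTwistedTensorAction (t : A → B → kˣ) (e : (Λ ⊗[k] Γ) ≃ₗ[k] T) {M : Type} [AddCommGroup M]
    [Module k M] [Module Λ M] (ℳ : A → Submodule k M) (ℬ : B → Submodule k Γ) (N : Type)
    [AddCommGroup N] [Module k N] [Module Γ N] [Module T (M ⊗[k] N)] : Prop :=
  ∀ (am : A) (bg : B) (l : Λ) (g : Γ) (m : M) (n : N), g ∈ ℬ bg → m ∈ ℳ am →
    e (l ⊗ₜ g) • (m ⊗ₜ n : M ⊗[k] N) = (t am bg : k) • ((l • m) ⊗ₜ (g • n))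

variable {t : A → B → kˣ} {e : (Λ ⊗[k] Γ) ≃ₗ[k] T} {ℬ : B → Submodule k Γ}
  {M N : Type} [AddCommGroup M] [Module k M] [Module Λ M] [SMulCommClass Λ k M]
  [AddCommGroup N] [Module k N] [Module Γ N] [SMulCommClass Γ k N]
  [Module T (M ⊗[k] N)] [SMulCommClass T k (M ⊗[k] N)]
  {ℳ : A → Submodule k M} {𝒩 : B → Submodule k N}

theorem IsTwistedTensorAction.smul_eq_of_mem_tensorGrading (hP : IsTwistedTensorAction t e ℳ ℬ N)
    (l : Λ) {a : A} {b b' : B} {γ : Γ} (hγ : γ ∈ ℬ b) {z : M ⊗[k] N}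
    (hz : z ∈ tensorGrading ℳ 𝒩 (a, b')) :
    e (l ⊗ₜ γ) • z = (t a b : k) • map (Module.toModuleEnd k M l) (Module.toModuleEnd k N γ) z := by
  refine LinearMap.eqOn_span (f := DistribSMul.toLinearMap k _ (e (l ⊗ₜ γ)))
    (g := (t a b : k) • map (Module.toModuleEnd k M l) (Module.toModuleEnd k N γ)) ?_ hz
  rintro _ ⟨m, n, hm, -, rfl⟩
  simp [hP a b l γ m n hγ hm]

variable [DecidableEq A] [DecidableEq B] [DirectSum.Decomposition ℬ] [DirectSum.Decomposition ℳ]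
  [DirectSum.Decomposition 𝒩] {M' N' : Type} [AddCommGroup M'] [Module k M'] [Module Λ M']
  [SMulCommClass Λ k M'] [AddCommGroup N'] [Module k N'] [Module Γ N'] [SMulCommClass Γ k N']
  [Module T (M' ⊗[k] N')] [SMulCommClass T k (M' ⊗[k] N')]
  {ℳ' : A → Submodule k M'} {𝒩' : B → Submodule k N'}

theorem forall_map_smul_iff_comp_map_eq (hP : IsTwistedTensorAction t e ℳ ℬ N)
    (hP' : IsTwistedTensorAction t e ℳ' ℬ N') {F : M ⊗[k] N →ₗ[k] M' ⊗[k] N'}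
    (hF : ∀ p, ∀ z ∈ tensorGrading ℳ 𝒩 p, F z ∈ tensorGrading ℳ' 𝒩' p) :
    (∀ (r : T) z, F (r • z) = r • F z) ↔ ∀ (l : Λ) (γ : Γ),
      F ∘ₗ map (Module.toModuleEnd k M l) (Module.toModuleEnd k N γ) =
        map (Module.toModuleEnd k M' l) (Module.toModuleEnd k N' γ) ∘ₗ F := by
  have key : ∀ (l : Λ) {a b b'} {γ : Γ} (hγ : γ ∈ ℬ b) {m n} (hm : m ∈ ℳ a) (hn : n ∈ 𝒩 b'),
      e (l ⊗ₜ γ) • (m ⊗ₜ n) =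
          (t a b : k) • map (Module.toModuleEnd k M l) (Module.toModuleEnd k N γ) (m ⊗ₜ n) ∧
        e (l ⊗ₜ γ) • F (m ⊗ₜ n) =
          (t a b : k) • map (Module.toModuleEnd k M' l) (Module.toModuleEnd k N' γ) (F (m ⊗ₜ n)) :=
    fun l _ _ _ _ hγ _ _ hm hn =>
      ⟨hP.smul_eq_of_mem_tensorGrading l hγ (tmul_mem_tensorGrading ℳ 𝒩 hm hn),
        hP'.smul_eq_of_mem_tensorGrading l hγ (hF _ _ (tmul_mem_tensorGrading ℳ 𝒩 hm hn))⟩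
  constructor
  · intro hT l γ
    induction γ using DirectSum.Decomposition.inductionOn ℬ with
    | zero => simp only [map_zero, map_zero_right, LinearMap.comp_zero, LinearMap.zero_comp]
    | add γ γ' h h' =>
      simp only [map_add, map_add_right, LinearMap.comp_add, LinearMap.add_comp, h, h']
    | homogeneous γ =>
      refine TensorProduct.ext_homogeneous ℳ 𝒩 fun a b' m hm n hn => ?_
      obtain ⟨h₁, h₂⟩ := key l γ.2 hm hn
      rw [← (t a _).isUnit.smul_left_cancel, LinearMap.comp_apply, LinearMap.comp_apply,
        ← map_smul, ← h₁, hT, h₂]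
  · intro hcomm r z
    obtain ⟨x, rfl⟩ := e.surjective r
    suffices F ∘ₗ Module.toModuleEnd k _ (e x) = Module.toModuleEnd k _ (e x) ∘ₗ F from
      LinearMap.congr_fun this z
    induction x using TensorProduct.induction_on with
    | zero => simp only [map_zero, LinearMap.comp_zero, LinearMap.zero_comp]
    | add x y hx hy => simp only [map_add, LinearMap.comp_add, LinearMap.add_comp, hx, hy]
    | tmul l γ =>
      induction γ using DirectSum.Decomposition.inductionOn ℬ with
      | zero => simp only [tmul_zero, map_zero, LinearMap.comp_zero, LinearMap.zero_comp]
      | add γ γ' h h' =>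
        simp only [tmul_add, map_add, LinearMap.comp_add, LinearMap.add_comp, h, h']
      | homogeneous γ =>
        refine TensorProduct.ext_homogeneous ℳ 𝒩 fun a b' m hm n hn => ?_
        obtain ⟨h₁, h₂⟩ := key l γ.2 hm hn
        simp only [LinearMap.comp_apply, Module.toModuleEnd_apply, DistribSMul.toLinearMap_apply]
        rw [h₁, h₂, map_smul, ← LinearMap.comp_apply F, hcomm, LinearMap.comp_apply]

variable [AddCommGroup A] [AddCommGroup B]

theorem map_mem_grHom (hP : IsTwistedTensorAction t e ℳ ℬ N)
    (hP' : IsTwistedTensorAction t e ℳ' ℬ N') {f : M →ₗ[k] M'} (hf : f ∈ grHom Λ ℳ ℳ')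
    {g : N →ₗ[k] N'} (hg : g ∈ grHom Γ 𝒩 𝒩') :
    map f g ∈ grHom T (tensorGrading ℳ 𝒩) (tensorGrading ℳ' 𝒩') := by
  have hgr : ∀ p, ∀ z ∈ tensorGrading ℳ 𝒩 p, map f g z ∈ tensorGrading ℳ' 𝒩' p := by
    intro p z hz
    refine (Submodule.map_span_le (map f g) _ _).mpr ?_ (Submodule.mem_map_of_mem hz)
    rintro _ ⟨m, n, hm, hn, rfl⟩
    exact tmul_mem_tensorGrading ℳ' 𝒩' (hf.2 _ m hm) (hg.2 _ n hn)
  refine ⟨(forall_map_smul_iff_comp_map_eq hP hP' hgr).mpr fun l γ => ?_, hgr⟩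
  rw [← map_comp, ← map_comp]
  congr 1 <;> ext <;> simp [hf.1, hg.1]

theorem comp_rTensor_gradedOperators [DirectSum.Decomposition ℳ']
    (hP : IsTwistedTensorAction t e ℳ ℬ N) (hP' : IsTwistedTensorAction t e ℳ' ℬ N')
    {F : M ⊗[k] N →ₗ[k] M' ⊗[k] N'}
    (hF : F ∈ grHom T (tensorGrading ℳ 𝒩) (tensorGrading ℳ' 𝒩')) (i : Λ ⊕ A) :
    F ∘ₗ (gradedOperators ℳ Λ i).rTensor N = (gradedOperators ℳ' Λ i).rTensor N' ∘ₗ F := by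
  cases i with
  | inl l =>
    have h := (forall_map_smul_iff_comp_map_eq hP hP' hF.2).mp hF.1 l 1
    rwa [map_one, map_one] at h
  | inr a =>
    exact comp_map_eq_map_comp_of_graded ℳ 𝒩 ℳ' 𝒩' hF.2 (fun a' => if a' = a then 1 else 0)
      (fun _ => 1) (fun _ _ => gradedProj_of_mem ℳ) (fun _ _ => gradedProj_of_mem ℳ')
      (fun _ n _ => (one_smul k n).symm) (fun _ n _ => (one_smul k n).symm)

theorem comp_lTensor_gradedOperators [DirectSum.Decomposition 𝒩']
    (hP : IsTwistedTensorAction t e ℳ ℬ N) (hP' : IsTwistedTensorAction t e ℳ' ℬ N')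
    {F : M ⊗[k] N →ₗ[k] M' ⊗[k] N'}
    (hF : F ∈ grHom T (tensorGrading ℳ 𝒩) (tensorGrading ℳ' 𝒩')) (j : Γ ⊕ B) :
    F ∘ₗ (gradedOperators 𝒩 Γ j).lTensor M = (gradedOperators 𝒩' Γ j).lTensor M' ∘ₗ F := by
  cases j with
  | inl γ =>
    have h := (forall_map_smul_iff_comp_map_eq hP hP' hF.2).mp hF.1 1 γ
    rwa [map_one, map_one] at h
  | inr b =>
    exact comp_map_eq_map_comp_of_graded ℳ 𝒩 ℳ' 𝒩' hF.2 (fun _ => 1)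
      (fun b' => if b' = b then 1 else 0)
      (fun _ m _ => (one_smul k m).symm) (fun _ m _ => (one_smul k m).symm)
      (fun _ _ => gradedProj_of_mem 𝒩) (fun _ _ => gradedProj_of_mem 𝒩')

end Twisted

theorem stmt5_general {k A B Λ Γ T M M' N N' : Type} [Field k]
    [AddCommGroup A] [AddCommGroup B] [DecidableEq A] [DecidableEq B]
    [Ring Λ] [Algebra k Λ] [Ring Γ] [Algebra k Γ]
    (ℬ : B → Submodule k Γ)
    [GradedAlgebra ℬ]
    (t : A → B → kˣ)
    [Ring T] [Algebra k T] (e : (Λ ⊗[k] Γ) ≃ₗ[k] T)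
    -- graded modules M, M' over Λ (M finitely generated)
    [AddCommGroup M] [Module k M] [Module Λ M] [SMulCommClass Λ k M]
    (ℳ : A → Submodule k M) [DirectSum.Decomposition ℳ]
    [Module.Finite Λ M]
    [AddCommGroup M'] [Module k M'] [Module Λ M'] [SMulCommClass Λ k M']
    (ℳ' : A → Submodule k M') [DirectSum.Decomposition ℳ']
    -- graded modules N, N' over Γ (N finitely generated)
    [AddCommGroup N] [Module k N] [Module Γ N] [SMulCommClass Γ k N]
    (𝒩 : B → Submodule k N) [DirectSum.Decomposition 𝒩]
    [Module.Finite Γ N]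
    [AddCommGroup N'] [Module k N'] [Module Γ N'] [SMulCommClass Γ k N']
    (𝒩' : B → Submodule k N') [DirectSum.Decomposition 𝒩']
    -- the twisted T-module structures on M ⊗[k] N and M' ⊗[k] N'
    [Module T (M ⊗[k] N)] [SMulCommClass T k (M ⊗[k] N)]
    (hact : ∀ (am : A) (bg : B) (l : Λ) (g : Γ) (m : M) (n : N), g ∈ ℬ bg → m ∈ ℳ am →
      e (l ⊗ₜ g) • (m ⊗ₜ n : M ⊗[k] N) = (t am bg : k) • ((l • m) ⊗ₜ (g • n)))
    [Module T (M' ⊗[k] N')] [SMulCommClass T k (M' ⊗[k] N')]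
    (hact' : ∀ (am : A) (bg : B) (l : Λ) (g : Γ) (m : M') (n : N'), g ∈ ℬ bg → m ∈ ℳ' am →
      e (l ⊗ₜ g) • (m ⊗ₜ n : M' ⊗[k] N') = (t am bg : k) • ((l • m) ⊗ₜ (g • n))) :
    ∃ Φ : ((grHom Λ ℳ ℳ') ⊗[k] (grHom Γ 𝒩 𝒩')) ≃ₗ[k]
        (grHom T (tensorGrading ℳ 𝒩) (tensorGrading ℳ' 𝒩')),
      ∀ (f : grHom Λ ℳ ℳ') (g : grHom Γ 𝒩 𝒩'),
        (Φ (f ⊗ₜ g) : (M ⊗[k] N) →ₗ[k] (M' ⊗[k] N')) =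
          TensorProduct.map (f : M →ₗ[k] M') (g : N →ₗ[k] N') := by
  let Φ := homTensorHomMap (.id k) M N M' N' ∘ₗ
    map (grHom Λ ℳ ℳ').subtype (grHom Γ 𝒩 𝒩').subtype
  have hΦ : Function.Injective Φ := homTensorHomMap_injective.comp
    (map_injective_of_flat_flat _ _ (Submodule.injective_subtype _) (Submodule.injective_subtype _))
  have hrange : LinearMap.range Φ = grHom T (tensorGrading ℳ 𝒩) (tensorGrading ℳ' 𝒩') := by
    refine le_antisymm ?_ fun F hF => ?_
    · rintro _ ⟨u, rfl⟩
      induction u using TensorProduct.induction_on with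
      | zero => rw [map_zero]; exact zero_mem _
      | tmul f g => exact map_mem_grHom hact hact' f.2 g.2
      | add u v hu hv => rw [map_add]; exact add_mem hu hv
    · obtain ⟨v, rfl⟩ := mem_range_homTensorHomMap_of_intertwines (R := Λ) (S := Γ)
        (fun l => ⟨.inl l, fun _ => rfl⟩) (fun γ => ⟨.inl γ, fun _ => rfl⟩)
        (comp_rTensor_gradedOperators hact hact' hF) (comp_lTensor_gradedOperators hact hact' hF)
      refine ⟨map (Submodule.inclusion (intertwiners_gradedOperators_le_grHom ℳ ℳ' Λ))
        (Submodule.inclusion (intertwiners_gradedOperators_le_grHom 𝒩 𝒩' Γ)) v, ?_⟩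
      simp only [Φ, LinearMap.comp_apply, map_map, Submodule.subtype_comp_inclusion]
  exact ⟨(LinearEquiv.ofInjective Φ hΦ).trans (LinearEquiv.ofEq _ _ hrange), fun f g => rfl⟩

/-- For graded modules `M, M'` over `Λ` and `N, N'` over `Γ`, with `M`, `N`
finitely generated, the natural map
`grHom_Λ(M,M') ⊗ grHom_Γ(N,N') → grHom_{Λ⊗ᵗΓ}(M ⊗ᵗ N, M' ⊗ᵗ N')`, `φ ⊗ ψ ↦ φ ⊗ ψ`,
is a `k`-linear isomorphism. -/
theorem stmt5 {k A B Λ Γ T M M' N N' : Type} [Field k]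
    [AddCommGroup A] [AddCommGroup B] [DecidableEq A] [DecidableEq B]
    [Ring Λ] [Algebra k Λ] [Ring Γ] [Algebra k Γ]
    (𝒜 : A → Submodule k Λ) (ℬ : B → Submodule k Γ)
    [GradedAlgebra 𝒜] [GradedAlgebra ℬ]
    (t : A → B → kˣ)
    (ht₁ : ∀ a a' b, t (a + a') b = t a b * t a' b)
    (ht₂ : ∀ a b b', t a (b + b') = t a b * t a b')
    [Ring T] [Algebra k T] (e : (Λ ⊗[k] Γ) ≃ₗ[k] T)
    (he1 : e (1 ⊗ₜ 1) = 1)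
    (hemul : ∀ {a b} (x x' : Λ) (y y' : Γ), x' ∈ 𝒜 a → y ∈ ℬ b →
      e (x ⊗ₜ y) * e (x' ⊗ₜ y') = (t a b : k) • e ((x * x') ⊗ₜ (y * y')))
    -- graded modules M, M' over Λ (M finitely generated)
    [AddCommGroup M] [Module k M] [Module Λ M] [IsScalarTower k Λ M] [SMulCommClass Λ k M]
    (ℳ : A → Submodule k M) [DirectSum.Decomposition ℳ]
    (hℳ : ∀ {a a'} (l : Λ) (m : M), l ∈ 𝒜 a → m ∈ ℳ a' → l • m ∈ ℳ (a + a'))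
    [Module.Finite Λ M]
    [AddCommGroup M'] [Module k M'] [Module Λ M'] [IsScalarTower k Λ M'] [SMulCommClass Λ k M']
    (ℳ' : A → Submodule k M') [DirectSum.Decomposition ℳ']
    (hℳ' : ∀ {a a'} (l : Λ) (m : M'), l ∈ 𝒜 a → m ∈ ℳ' a' → l • m ∈ ℳ' (a + a'))
    -- graded modules N, N' over Γ (N finitely generated)
    [AddCommGroup N] [Module k N] [Module Γ N] [IsScalarTower k Γ N] [SMulCommClass Γ k N]
    (𝒩 : B → Submodule k N) [DirectSum.Decomposition 𝒩]
    (h𝒩 : ∀ {b b'} (g : Γ) (n : N), g ∈ ℬ b → n ∈ 𝒩 b' → g • n ∈ 𝒩 (b + b'))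
    [Module.Finite Γ N]
    [AddCommGroup N'] [Module k N'] [Module Γ N'] [IsScalarTower k Γ N'] [SMulCommClass Γ k N']
    (𝒩' : B → Submodule k N') [DirectSum.Decomposition 𝒩']
    (h𝒩' : ∀ {b b'} (g : Γ) (n : N'), g ∈ ℬ b → n ∈ 𝒩' b' → g • n ∈ 𝒩' (b + b'))
    -- the twisted T-module structures on M ⊗[k] N and M' ⊗[k] N'
    [Module T (M ⊗[k] N)] [IsScalarTower k T (M ⊗[k] N)] [SMulCommClass T k (M ⊗[k] N)]
    (hact : ∀ (am : A) (bg : B) (l : Λ) (g : Γ) (m : M) (n : N), g ∈ ℬ bg → m ∈ ℳ am →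
      e (l ⊗ₜ g) • (m ⊗ₜ n : M ⊗[k] N) = (t am bg : k) • ((l • m) ⊗ₜ (g • n)))
    [Module T (M' ⊗[k] N')] [IsScalarTower k T (M' ⊗[k] N')] [SMulCommClass T k (M' ⊗[k] N')]
    (hact' : ∀ (am : A) (bg : B) (l : Λ) (g : Γ) (m : M') (n : N'), g ∈ ℬ bg → m ∈ ℳ' am →
      e (l ⊗ₜ g) • (m ⊗ₜ n : M' ⊗[k] N') = (t am bg : k) • ((l • m) ⊗ₜ (g • n))) :
    ∃ Φ : ((grHom Λ ℳ ℳ') ⊗[k] (grHom Γ 𝒩 𝒩')) ≃ₗ[k]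
        (grHom T (tensorGrading ℳ 𝒩) (tensorGrading ℳ' 𝒩')),
      ∀ (f : grHom Λ ℳ ℳ') (g : grHom Γ 𝒩 𝒩'),
        (Φ (f ⊗ₜ g) : (M ⊗[k] N) →ₗ[k] (M' ⊗[k] N')) =
          TensorProduct.map (f : M →ₗ[k] M') (g : N →ₗ[k] N') :=
  stmt5_general ℬ t e ℳ ℳ' 𝒩 𝒩' hact hact'
end

section
/- Let X be a graded Λ^e-module and Y a graded Γ^e-module, where Λ^e = Λ ⊗_k Λ^op and Γ^e = Γ ⊗_k Γ^op. Then the rule (λ ⊗ γ)(x ⊗ y)(λ' ⊗ γ') = t⟨|x|,|γ|⟩ t⟨|λ'|,|y|⟩ t⟨|λ'|,|γ|⟩ (λxλ') ⊗ (γyγ') defines a graded bimodule structure over Λ ⊗_k^t Γ, i.e. a graded (Λ ⊗_k^t Γ)^e-module structure on X ⊗_k Y. -/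
/-! The left action of `λ ⊗ γ` is `x ⊗ y ↦ t⟨|x|,|γ|⟩ (λx ⊗ γy)` and the right action of
`λ' ⊗ γ'` is `x ⊗ y ↦ t⟨|λ'|,|y|⟩ (xλ' ⊗ yγ')`, the degree-dependent scalars being realised by
rescaling the homogeneous components of `X` resp. `Y`. Composing them gives the stated rule since
`t⟨|x| + |λ'|, |γ|⟩ = t⟨|x|,|γ|⟩ t⟨|λ'|,|γ|⟩`. Unitality, associativity and the commutation of
the two actions are multilinear identities, so it suffices to check them on homogeneous pure
tensors, where each reduces to the bimultiplicativity of `t`. -/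

open TensorProduct MulOpposite DirectSum

section GradedLift

variable {k ι M N : Type*} [CommSemiring k] [DecidableEq ι]
  [AddCommMonoid M] [Module k M] [AddCommMonoid N] [Module k N]
  (ℳ : ι → Submodule k M) [Decomposition ℳ]

noncomputable def gradedLift (φ : ∀ i, ℳ i →ₗ[k] N) : M →ₗ[k] N :=
  toModule k ι N φ ∘ₗ (decomposeLinearEquiv ℳ).toLinearMap

theorem gradedLift_of_mem (φ : ∀ i, ℳ i →ₗ[k] N) {i : ι} {m : M} (hm : m ∈ ℳ i) :
    gradedLift ℳ φ m = φ i ⟨m, hm⟩ := by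
  simp [gradedLift, decomposeLinearEquiv_apply, decompose_of_mem ℳ hm, ← lof_eq_of k,
    toModule_lof]

noncomputable def gradedScale (c : ι → k) : M →ₗ[k] M :=
  gradedLift ℳ fun i => c i • (ℳ i).subtype

theorem gradedScale_of_mem (c : ι → k) {i : ι} {m : M} (hm : m ∈ ℳ i) :
    gradedScale ℳ c m = c i • m := by
  simp [gradedScale, gradedLift_of_mem ℳ _ hm]

end GradedLift

section HomogeneousExt

variable {k ι ι' M M' T N : Type*} [CommSemiring k] [DecidableEq ι] [DecidableEq ι']
  [AddCommMonoid M] [Module k M] [AddCommMonoid M'] [Module k M']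
  [AddCommMonoid T] [Module k T] [AddCommMonoid N] [Module k N]
  (ℳ : ι → Submodule k M) [Decomposition ℳ] (ℳ' : ι' → Submodule k M') [Decomposition ℳ']
  (e : M ⊗[k] M' ≃ₗ[k] T)

theorem ext_of_homogeneous_tmul {f g : T →ₗ[k] N}
    (h : ∀ i j, ∀ m ∈ ℳ i, ∀ m' ∈ ℳ' j, f (e (m ⊗ₜ m')) = g (e (m ⊗ₜ m'))) : f = g := by
  refine (LinearMap.cancel_right e.surjective).mp <| TensorProduct.ext <|
    decompose_lhom_ext ℳ fun i => LinearMap.ext fun ⟨m, hm⟩ =>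
      decompose_lhom_ext ℳ' fun j => LinearMap.ext fun ⟨m', hm'⟩ => h i j m hm m' hm'

theorem ext₂_of_homogeneous_tmul {F G : T →ₗ[k] T →ₗ[k] N}
    (h : ∀ i j i' j', ∀ m ∈ ℳ i, ∀ m' ∈ ℳ' j, ∀ n ∈ ℳ i', ∀ n' ∈ ℳ' j',
      F (e (m ⊗ₜ m')) (e (n ⊗ₜ n')) = G (e (m ⊗ₜ m')) (e (n ⊗ₜ n'))) : F = G :=
  ext_of_homogeneous_tmul ℳ ℳ' e fun i j m hm m' hm' =>
    ext_of_homogeneous_tmul ℳ ℳ' e fun i' j' n hn n' hn' => h i j i' j' m hm m' hm' n hn n' hn'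

end HomogeneousExt

section LeftAction

variable {k A B Λ Γ X Y : Type*} [CommSemiring k] [DecidableEq A] [DecidableEq B]
  [Semiring Λ] [Algebra k Λ] [Semiring Γ] [Algebra k Γ]
  [AddCommMonoid X] [Module k X] [Module Λ X] [IsScalarTower k Λ X]
  [AddCommMonoid Y] [Module k Y] [Module Γ Y] [IsScalarTower k Γ Y]
  (t : A → B → kˣ) (𝒳 : A → Submodule k X) [Decomposition 𝒳]

noncomputable def twistedLeftAction (ℬ : B → Submodule k Γ) [Decomposition ℬ] :
    Λ ⊗[k] Γ →ₗ[k] Module.End k (X ⊗[k] Y) :=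
  lift <| (LinearMap.mul k _).compl₁₂
    (LinearMap.rTensorHom Y ∘ₗ (Algebra.lsmul k k X).toLinearMap)
    (gradedLift ℬ fun b => mapBilinear (RingHom.id k) X Y X Y (gradedScale 𝒳 fun a => t a b) ∘ₗ
      (Algebra.lsmul k k Y).toLinearMap ∘ₗ (ℬ b).subtype)

theorem twistedLeftAction_tmul {ℬ : B → Submodule k Γ} [Decomposition ℬ]
    (l : Λ) {b : B} {g : Γ} (hg : g ∈ ℬ b) {a : A} {x : X} (hx : x ∈ 𝒳 a) (y : Y) :
    twistedLeftAction t 𝒳 ℬ (l ⊗ₜ g) (x ⊗ₜ y) = (t a b : k) • ((l • x) ⊗ₜ (g • y)) := by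
  simp [twistedLeftAction, gradedLift_of_mem ℬ _ hg, gradedScale_of_mem 𝒳 _ hx, smul_tmul']

theorem twistedLeftAction_one [AddMonoid B] (ℬ : B → Submodule k Γ) [GradedAlgebra ℬ]
    (ht : ∀ a, t a 0 = 1) :
    twistedLeftAction (Y := Y) t 𝒳 ℬ ((1 : Λ) ⊗ₜ (1 : Γ)) = 1 := by
  refine TensorProduct.ext (decompose_lhom_ext 𝒳 fun a => LinearMap.ext fun ⟨x, hx⟩ =>
    LinearMap.ext fun y => ?_)
  simp [twistedLeftAction_tmul t 𝒳 (1 : Λ) (SetLike.one_mem_graded ℬ) hx, ht]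

end LeftAction

section RightAction

variable {k A B Λ Γ X Y : Type*} [CommSemiring k] [DecidableEq A] [DecidableEq B]
  [Semiring Λ] [Algebra k Λ] [Semiring Γ] [Algebra k Γ]
  [AddCommMonoid X] [Module k X] [Module Λᵐᵒᵖ X] [IsScalarTower k Λᵐᵒᵖ X]
  [AddCommMonoid Y] [Module k Y] [Module Γᵐᵒᵖ Y] [IsScalarTower k Γᵐᵒᵖ Y]
  (t : A → B → kˣ)

noncomputable def twistedRightAction (𝒜 : A → Submodule k Λ) [Decomposition 𝒜]
    (𝒴 : B → Submodule k Y) [Decomposition 𝒴] :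
    Λ ⊗[k] Γ →ₗ[k] Module.End k (X ⊗[k] Y) :=
  -- `flip`: `γ'` must act after the rescaling, which reads the degree of `y`, not of `yγ'`.
  lift <| (LinearMap.mul k _).flip.compl₁₂
    (gradedLift 𝒜 fun a => (mapBilinear (RingHom.id k) X Y X Y).flip
      (gradedScale 𝒴 fun b => t a b) ∘ₗ (Algebra.lsmul k k X).toLinearMap ∘ₗ
        (opLinearEquiv k).toLinearMap ∘ₗ (𝒜 a).subtype)
    (LinearMap.lTensorHom X ∘ₗ (Algebra.lsmul k k Y).toLinearMap ∘ₗ (opLinearEquiv k).toLinearMap)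

theorem twistedRightAction_tmul {𝒜 : A → Submodule k Λ} [Decomposition 𝒜]
    (𝒴 : B → Submodule k Y) [Decomposition 𝒴]
    {a : A} {l : Λ} (hl : l ∈ 𝒜 a) (g : Γ) (x : X) {b : B} {y : Y} (hy : y ∈ 𝒴 b) :
    twistedRightAction t 𝒜 𝒴 (l ⊗ₜ g) (x ⊗ₜ y) = (t a b : k) • ((op l • x) ⊗ₜ (op g • y)) := by
  simp [twistedRightAction, gradedLift_of_mem 𝒜 _ hl, gradedScale_of_mem 𝒴 _ hy, smul_tmul']

theorem twistedRightAction_one [AddMonoid A] (𝒜 : A → Submodule k Λ) [GradedAlgebra 𝒜]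
    (𝒴 : B → Submodule k Y) [Decomposition 𝒴]
    (ht : ∀ b, t 0 b = 1) :
    twistedRightAction (X := X) (Γ := Γ) t 𝒜 𝒴 ((1 : Λ) ⊗ₜ (1 : Γ)) = 1 := by
  refine TensorProduct.ext (LinearMap.ext fun x => decompose_lhom_ext 𝒴 fun b =>
    LinearMap.ext fun ⟨y, hy⟩ => ?_)
  simp [twistedRightAction_tmul t 𝒴 (SetLike.one_mem_graded 𝒜) (1 : Γ) x hy, ht]

end RightAction

section TwistedTensorAlgebra

variable {k A B Λ Γ T X Y : Type*} [CommSemiring k] [AddMonoid A] [AddMonoid B]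
  [DecidableEq A] [DecidableEq B]
  [Semiring Λ] [Algebra k Λ] [Semiring Γ] [Algebra k Γ]
  (𝒜 : A → Submodule k Λ) (ℬ : B → Submodule k Γ) [GradedAlgebra 𝒜] [GradedAlgebra ℬ]
  [Semiring T] [Algebra k T] (e : Λ ⊗[k] Γ ≃ₗ[k] T) {t : A → B → kˣ}

theorem twistedLeftAction_mul
    [AddCommMonoid X] [Module k X] [Module Λ X] [IsScalarTower k Λ X]
    [AddCommMonoid Y] [Module k Y] [Module Γ Y] [IsScalarTower k Γ Y]
    (𝒳 : A → Submodule k X) [Decomposition 𝒳]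
    (ht₁ : ∀ a a' b, t (a + a') b = t a b * t a' b)
    (ht₂ : ∀ a b b', t a (b + b') = t a b * t a b')
    (hemul : ∀ {a b} (x x' : Λ) (y y' : Γ), x' ∈ 𝒜 a → y ∈ ℬ b →
      e (x ⊗ₜ y) * e (x' ⊗ₜ y') = (t a b : k) • e ((x * x') ⊗ₜ (y * y')))
    (h𝒳l : ∀ {a p} (l : Λ) (x : X), l ∈ 𝒜 a → x ∈ 𝒳 p → l • x ∈ 𝒳 (a + p)) (u v : T) :
    twistedLeftAction (Y := Y) t 𝒳 ℬ (e.symm (u * v)) =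
      twistedLeftAction t 𝒳 ℬ (e.symm u) * twistedLeftAction t 𝒳 ℬ (e.symm v) := by
  set L := twistedLeftAction (Y := Y) t 𝒳 ℬ ∘ₗ e.symm.toLinearMap
  suffices (LinearMap.mul k T).compr₂ L = (LinearMap.mul k _).compl₁₂ L L from
    LinearMap.congr_fun₂ this u v
  refine ext₂_of_homogeneous_tmul 𝒜 ℬ e fun a b a' b' l _ g hg l' hl' g' hg' => ?_
  refine TensorProduct.ext (decompose_lhom_ext 𝒳 fun p => LinearMap.ext fun ⟨x, hx⟩ =>
    LinearMap.ext fun y => ?_)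
  simp only [L, LinearMap.compr₂_apply, LinearMap.compl₁₂_apply, LinearMap.mul_apply',
    LinearMap.comp_apply, LinearEquiv.coe_coe, LinearEquiv.symm_apply_apply, hemul l l' g g' hl' hg,
    map_smul, LinearMap.smul_apply, Module.End.mul_apply, TensorProduct.mk_apply,
    LinearMap.compr₂ₛₗ_apply, Submodule.subtype_apply]
  rw [twistedLeftAction_tmul t 𝒳 _ (SetLike.mul_mem_graded hg hg') hx,
    twistedLeftAction_tmul t 𝒳 _ hg' hx, map_smul,
    twistedLeftAction_tmul t 𝒳 _ hg (h𝒳l l' x hl' hx), mul_smul l, mul_smul g]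
  simp only [ht₁, ht₂, Units.val_mul, smul_smul]
  ring_nf

theorem twistedRightAction_mul
    [AddCommMonoid X] [Module k X] [Module Λᵐᵒᵖ X] [IsScalarTower k Λᵐᵒᵖ X]
    [AddCommMonoid Y] [Module k Y] [Module Γᵐᵒᵖ Y] [IsScalarTower k Γᵐᵒᵖ Y]
    (𝒴 : B → Submodule k Y) [Decomposition 𝒴]
    (ht₁ : ∀ a a' b, t (a + a') b = t a b * t a' b)
    (ht₂ : ∀ a b b', t a (b + b') = t a b * t a b')
    (hemul : ∀ {a b} (x x' : Λ) (y y' : Γ), x' ∈ 𝒜 a → y ∈ ℬ b →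
      e (x ⊗ₜ y) * e (x' ⊗ₜ y') = (t a b : k) • e ((x * x') ⊗ₜ (y * y')))
    (h𝒴r : ∀ {b q} (g : Γ) (y : Y), g ∈ ℬ b → y ∈ 𝒴 q → op g • y ∈ 𝒴 (q + b)) (u v : T) :
    twistedRightAction (X := X) t 𝒜 𝒴 (e.symm (u * v)) =
      twistedRightAction t 𝒜 𝒴 (e.symm v) * twistedRightAction t 𝒜 𝒴 (e.symm u) := by
  set R := twistedRightAction (X := X) t 𝒜 𝒴 ∘ₗ e.symm.toLinearMap
  suffices (LinearMap.mul k T).compr₂ R = ((LinearMap.mul k _).compl₁₂ R R).flip from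
    LinearMap.congr_fun₂ this u v
  refine ext₂_of_homogeneous_tmul 𝒜 ℬ e fun a b a' b' l hl g hg l' hl' g' _ => ?_
  refine TensorProduct.ext (LinearMap.ext fun x => decompose_lhom_ext 𝒴 fun q =>
    LinearMap.ext fun ⟨y, hy⟩ => ?_)
  simp only [R, LinearMap.compr₂_apply, LinearMap.flip_apply, LinearMap.compl₁₂_apply,
    LinearMap.mul_apply', LinearMap.comp_apply, LinearEquiv.coe_coe, LinearEquiv.symm_apply_apply,
    hemul l l' g g' hl' hg, map_smul, LinearMap.smul_apply, Module.End.mul_apply,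
    LinearMap.compr₂ₛₗ_apply, TensorProduct.mk_apply, Submodule.subtype_apply]
  rw [twistedRightAction_tmul t 𝒴 (SetLike.mul_mem_graded hl hl') _ x hy,
    twistedRightAction_tmul t 𝒴 hl _ x hy, map_smul,
    twistedRightAction_tmul t 𝒴 hl' _ _ (h𝒴r g y hg hy), op_mul, op_mul, mul_smul (op l'),
    mul_smul (op g')]
  simp only [ht₁, ht₂, Units.val_mul, smul_smul]
  ring_nf

theorem twistedLeftAction_commute_twistedRightAction
    [AddCommMonoid X] [Module k X] [Module Λ X] [Module Λᵐᵒᵖ X]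
    [IsScalarTower k Λ X] [IsScalarTower k Λᵐᵒᵖ X] [SMulCommClass Λ Λᵐᵒᵖ X]
    [AddCommMonoid Y] [Module k Y] [Module Γ Y] [Module Γᵐᵒᵖ Y]
    [IsScalarTower k Γ Y] [IsScalarTower k Γᵐᵒᵖ Y] [SMulCommClass Γ Γᵐᵒᵖ Y]
    (𝒳 : A → Submodule k X) [Decomposition 𝒳] (𝒴 : B → Submodule k Y) [Decomposition 𝒴]
    (ht₁ : ∀ a a' b, t (a + a') b = t a b * t a' b)
    (ht₂ : ∀ a b b', t a (b + b') = t a b * t a b')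
    (h𝒳r : ∀ {a p} (l : Λ) (x : X), l ∈ 𝒜 a → x ∈ 𝒳 p → op l • x ∈ 𝒳 (p + a))
    (h𝒴l : ∀ {b q} (g : Γ) (y : Y), g ∈ ℬ b → y ∈ 𝒴 q → g • y ∈ 𝒴 (b + q)) (u v : Λ ⊗[k] Γ) :
    Commute (twistedLeftAction t 𝒳 ℬ u) (twistedRightAction t 𝒜 𝒴 v) := by
  suffices (LinearMap.mul k _).compl₁₂ (twistedLeftAction t 𝒳 ℬ) (twistedRightAction t 𝒜 𝒴) =
      ((LinearMap.mul k _).compl₁₂ (twistedRightAction t 𝒜 𝒴) (twistedLeftAction t 𝒳 ℬ)).flip from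
    LinearMap.congr_fun₂ this u v
  refine ext₂_of_homogeneous_tmul 𝒜 ℬ (.refl k _) fun a b a' b' l _ g hg l' hl' g' _ => ?_
  refine TensorProduct.ext (decompose_lhom_ext 𝒳 fun p => LinearMap.ext fun ⟨x, hx⟩ =>
    decompose_lhom_ext 𝒴 fun q => LinearMap.ext fun ⟨y, hy⟩ => ?_)
  simp only [LinearMap.flip_apply, LinearMap.compl₁₂_apply, LinearMap.mul_apply',
    LinearEquiv.refl_apply, Module.End.mul_apply, LinearMap.compr₂ₛₗ_apply,
    LinearMap.comp_apply, Submodule.subtype_apply, TensorProduct.mk_apply]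
  rw [twistedRightAction_tmul t 𝒴 hl' g' x hy, map_smul,
    twistedLeftAction_tmul t 𝒳 l hg (h𝒳r l' x hl' hx),
    twistedLeftAction_tmul t 𝒳 l hg hx y, map_smul,
    twistedRightAction_tmul t 𝒴 hl' g' _ (h𝒴l g y hg hy), smul_comm l (op l') x,
    smul_comm g (op g') y]
  simp only [ht₁, ht₂, Units.val_mul, smul_smul]
  ring_nf

theorem twistedLeftAction_twistedRightAction_tmul
    [AddCommMonoid X] [Module k X] [Module Λ X] [Module Λᵐᵒᵖ X]
    [IsScalarTower k Λ X] [IsScalarTower k Λᵐᵒᵖ X] [SMulCommClass Λ Λᵐᵒᵖ X]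
    [AddCommMonoid Y] [Module k Y] [Module Γ Y] [Module Γᵐᵒᵖ Y]
    [IsScalarTower k Γ Y] [IsScalarTower k Γᵐᵒᵖ Y] [SMulCommClass Γ Γᵐᵒᵖ Y]
    (𝒳 : A → Submodule k X) [Decomposition 𝒳] (𝒴 : B → Submodule k Y) [Decomposition 𝒴]
    (ht₁ : ∀ a a' b, t (a + a') b = t a b * t a' b)
    (h𝒳r : ∀ {a p} (l : Λ) (x : X), l ∈ 𝒜 a → x ∈ 𝒳 p → op l • x ∈ 𝒳 (p + a))
    {ax a' : A} {bg by' : B} (l : Λ) {l' : Λ} {g : Γ} (g' : Γ) {x : X} {y : Y}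
    (hg : g ∈ ℬ bg) (hl' : l' ∈ 𝒜 a') (hx : x ∈ 𝒳 ax) (hy : y ∈ 𝒴 by') :
    twistedLeftAction t 𝒳 ℬ (l ⊗ₜ g) (twistedRightAction t 𝒜 𝒴 (l' ⊗ₜ g') (x ⊗ₜ y)) =
      ((t ax bg : k) * (t a' by' : k) * (t a' bg : k)) •
        ((op l' • l • x) ⊗ₜ (op g' • g • y)) := by
  rw [twistedRightAction_tmul t 𝒴 hl' g' x hy, map_smul,
    twistedLeftAction_tmul t 𝒳 l hg (h𝒳r l' x hl' hx), ht₁, smul_comm l (op l') x,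
    smul_comm g (op g') y]
  simp only [Units.val_mul, smul_smul]
  ring_nf

end TwistedTensorAlgebra

/-- Let `X` be a graded `Λ`-bimodule (graded `Λᵉ`-module) and `Y` a graded
`Γ`-bimodule.  Then the rule
`(λ ⊗ γ)(x ⊗ y)(λ' ⊗ γ') = t⟨|x|,|γ|⟩ t⟨|λ'|,|y|⟩ t⟨|λ'|,|γ|⟩ (λxλ') ⊗ (γyγ')`
defines a graded `(Λ ⊗ᵗ Γ)`-bimodule (i.e. `(Λ ⊗ᵗ Γ)ᵉ`-module) structure on `X ⊗[k] Y`: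
there are commuting unital associative left and right `T`-actions satisfying this rule on
homogeneous elements.  (Right actions are encoded via `op`.) -/
theorem stmt9 {k A B Λ Γ T X Y : Type} [Field k]
    [AddCommGroup A] [AddCommGroup B] [DecidableEq A] [DecidableEq B]
    [Ring Λ] [Algebra k Λ] [Ring Γ] [Algebra k Γ]
    (𝒜 : A → Submodule k Λ) (ℬ : B → Submodule k Γ)
    [GradedAlgebra 𝒜] [GradedAlgebra ℬ]
    (t : A → B → kˣ)
    (ht₁ : ∀ a a' b, t (a + a') b = t a b * t a' b)
    (ht₂ : ∀ a b b', t a (b + b') = t a b * t a b')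
    [Ring T] [Algebra k T] (e : (Λ ⊗[k] Γ) ≃ₗ[k] T)
    (he1 : e (1 ⊗ₜ 1) = 1)
    (hemul : ∀ {a b} (x x' : Λ) (y y' : Γ), x' ∈ 𝒜 a → y ∈ ℬ b →
      e (x ⊗ₜ y) * e (x' ⊗ₜ y') = (t a b : k) • e ((x * x') ⊗ₜ (y * y')))
    -- X a graded Λ-bimodule
    [AddCommGroup X] [Module k X] [Module Λ X] [Module Λᵐᵒᵖ X]
    [IsScalarTower k Λ X] [IsScalarTower k Λᵐᵒᵖ X] [SMulCommClass Λ Λᵐᵒᵖ X]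
    (𝒳 : A → Submodule k X) [DirectSum.Decomposition 𝒳]
    (h𝒳l : ∀ {a p} (l : Λ) (x : X), l ∈ 𝒜 a → x ∈ 𝒳 p → l • x ∈ 𝒳 (a + p))
    (h𝒳r : ∀ {a p} (l : Λ) (x : X), l ∈ 𝒜 a → x ∈ 𝒳 p → (op l) • x ∈ 𝒳 (p + a))
    -- Y a graded Γ-bimodule
    [AddCommGroup Y] [Module k Y] [Module Γ Y] [Module Γᵐᵒᵖ Y]
    [IsScalarTower k Γ Y] [IsScalarTower k Γᵐᵒᵖ Y] [SMulCommClass Γ Γᵐᵒᵖ Y]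
    (𝒴 : B → Submodule k Y) [DirectSum.Decomposition 𝒴]
    (h𝒴l : ∀ {b q} (g : Γ) (y : Y), g ∈ ℬ b → y ∈ 𝒴 q → g • y ∈ 𝒴 (b + q))
    (h𝒴r : ∀ {b q} (g : Γ) (y : Y), g ∈ ℬ b → y ∈ 𝒴 q → (op g) • y ∈ 𝒴 (q + b)) :
    ∃ (actL : T →ₗ[k] (X ⊗[k] Y) →ₗ[k] (X ⊗[k] Y))
      (actR : T →ₗ[k] (X ⊗[k] Y) →ₗ[k] (X ⊗[k] Y)),
      -- left action axioms
      (∀ w, actL 1 w = w) ∧ (∀ u v w, actL (u * v) w = actL u (actL v w)) ∧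
      -- right action axioms
      (∀ w, actR 1 w = w) ∧ (∀ u v w, actR (u * v) w = actR v (actR u w)) ∧
      -- the two actions commute (bimodule condition)
      (∀ u v w, actL u (actR v w) = actR v (actL u w)) ∧
      -- the defining rule on homogeneous elements
      (∀ (ax : A) (a' : A) (bg : B) (by' : B) (l l' : Λ) (g g' : Γ) (x : X) (y : Y),
        g ∈ ℬ bg → l' ∈ 𝒜 a' → x ∈ 𝒳 ax → y ∈ 𝒴 by' →
        actL (e (l ⊗ₜ g)) (actR (e (l' ⊗ₜ g')) (x ⊗ₜ y)) =
          ((t ax bg : k) * (t a' by' : k) * (t a' bg : k)) •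
            (((op l') • (l • x)) ⊗ₜ (((op g') • (g • y)) : Y))) := by
  have ht0r (a : A) : t a 0 = 1 := by simpa using ht₂ a 0 0
  have ht0l (b : B) : t 0 b = 1 := by simpa using ht₁ 0 0 b
  have he1' : e.symm 1 = (1 : Λ) ⊗ₜ (1 : Γ) := e.symm_apply_eq.mpr he1.symm
  refine ⟨twistedLeftAction t 𝒳 ℬ ∘ₗ e.symm.toLinearMap,
    twistedRightAction t 𝒜 𝒴 ∘ₗ e.symm.toLinearMap, fun w => ?_, fun u v w => ?_,
    fun w => ?_, fun u v w => ?_, fun u v w => ?_,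
    fun ax a' bg by' l l' g g' x y hg hl' hx hy => ?_⟩
  · simp [he1', twistedLeftAction_one t 𝒳 ℬ ht0r]
  · exact LinearMap.congr_fun (twistedLeftAction_mul 𝒜 ℬ e 𝒳 ht₁ ht₂ hemul h𝒳l u v) w
  · simp [he1', twistedRightAction_one t 𝒜 𝒴 ht0l]
  · exact LinearMap.congr_fun (twistedRightAction_mul 𝒜 ℬ e 𝒴 ht₁ ht₂ hemul h𝒴r u v) w
  · exact LinearMap.congr_fun
      (twistedLeftAction_commute_twistedRightAction 𝒜 ℬ 𝒳 𝒴 ht₁ ht₂ h𝒳r h𝒴l _ _).eq w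
  · simpa using twistedLeftAction_twistedRightAction_tmul 𝒜 ℬ 𝒳 𝒴 ht₁ h𝒳r l g' hg hl' hx hy
end

section
/- Let q ∈ k^× be an element which is not a root of unity. Then the center of the quantum plane R = k⟨r,s⟩/(sr − q·rs) is k (the scalars), and consequently R is not finitely generated as a module over its center. -/
/-! The monomials `r^m s^n` form a `k`-basis of `R`: they span since `r` and `s` map their span
into itself, and they are independent since, in the representation `r e_{m,n} = e_{m+1,n}`,
`s e_{m,n} = q^m e_{m,n+1}` of `R` on `k^{(ℕ × ℕ)}`, the monomial `r^m s^n` sends `e_{0,0}` to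
`e_{m,n}`. If `z = ∑ c_{m,n} r^m s^n` is central, comparing coefficients in `sz = zs` and
`rz = zr` gives `q^m c_{m,n} = c_{m,n} = q^n c_{m,n}`, so only `c_{0,0}` can be nonzero when `q`
is not a root of unity. Being finite over the scalars would make `R` finite-dimensional. -/

noncomputable section

/-- The defining relation `sr = q·rs` of the quantum plane `k⟨r,s⟩/(sr − q·rs)`,
with `r = ι 0` and `s = ι 1`. -/
inductive QPlaneRel (k : Type) [Field k] (q : k) :
    FreeAlgebra k (Fin 2) → FreeAlgebra k (Fin 2) → Prop
  | comm : QPlaneRel k q (FreeAlgebra.ι k 1 * FreeAlgebra.ι k 0)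
      (q • (FreeAlgebra.ι k 0 * FreeAlgebra.ι k 1))

/-- The quantum plane `k⟨r,s⟩/(sr − q·rs)`. -/
abbrev QPlane (k : Type) [Field k] (q : k) : Type := RingQuot (QPlaneRel k q)

open Module

namespace Finsupp

variable {R ι : Type*} [CommSemiring R]

def weightedShift (f : ι → ι) (w : ι → R) : (ι →₀ R) →ₗ[R] (ι →₀ R) :=
  linearCombination R fun i => single (f i) (w i)

@[simp] lemma weightedShift_single (f : ι → ι) (w : ι → R) (i : ι) (a : R) :
    weightedShift f w (single i a) = single (f i) (w i * a) := by
  simp [weightedShift, smul_single, mul_comm]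

lemma weightedShift_apply_apply {f : ι → ι} (hf : Function.Injective f) (w : ι → R)
    (x : ι →₀ R) (i : ι) : weightedShift f w x (f i) = w i * x i := by
  induction x using Finsupp.induction_linear with
  | zero => simp
  | add x y hx hy => simp [hx, hy, mul_add]
  | single j a => by_cases h : j = i <;> simp [h, hf.eq_iff]

end Finsupp

lemma pow_mul_pow_of_mul_eq_smul {k A : Type*} [CommSemiring k] [Semiring A] [Algebra k A]
    {q : k} {a b : A} (h : b * a = q • (a * b)) (m n : ℕ) :
    b ^ n * a ^ m = q ^ (n * m) • (a ^ m * b ^ n) := by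
  have hb : ∀ m : ℕ, b * a ^ m = q ^ m • (a ^ m * b) := by
    intro m
    induction m with
    | zero => simp
    | succ m ih =>
      rw [pow_succ, ← mul_assoc, ih, smul_mul_assoc, mul_assoc, h, mul_smul_comm, smul_smul,
        ← pow_succ, mul_assoc]
  induction n with
  | zero => simp
  | succ n ih =>
    rw [pow_succ, mul_assoc, hb, mul_smul_comm, ← mul_assoc, ih, smul_mul_assoc, smul_smul,
      ← pow_add, mul_assoc, ← pow_succ, Nat.succ_mul, add_comm (n * m)]

lemma Submodule.eq_top_of_one_mem_of_mul_mem {k A : Type*} [CommSemiring k] [Semiring A]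
    [Algebra k A] {S : Set A} (hS : Algebra.adjoin k S = ⊤) {T : Submodule k A} (h1 : 1 ∈ T)
    (hmul : ∀ x ∈ S, ∀ t ∈ T, x * t ∈ T) : T = ⊤ := by
  refine Submodule.eq_top_iff'.mpr fun x => ?_
  have hx : x ∈ Algebra.adjoin k S := hS ▸ Algebra.mem_top
  suffices ∀ t ∈ T, x * t ∈ T by simpa using this 1 h1
  induction hx using Algebra.adjoin_induction with
  | mem x hx => exact hmul x hx
  | algebraMap c =>
    exact fun t ht => by simpa [Algebra.algebraMap_eq_smul_one] using T.smul_mem c ht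
  | add x y _ _ hx hy => exact fun t ht => by simpa [add_mul] using T.add_mem (hx t ht) (hy t ht)
  | mul x y _ _ hx hy => exact fun t ht => by simpa [mul_assoc] using hx _ (hy t ht)

lemma Subalgebra.not_finite_of_eq_bot {k A : Type*} [CommSemiring k] [Semiring A] [Algebra k A]
    {S : Subalgebra k A} (hS : S = ⊥) (hA : ¬ Module.Finite k A) : ¬ Module.Finite S A := by
  subst hS
  intro h
  exact hA (Module.Finite.trans (⊥ : Subalgebra k A) A)

lemma eq_zero_of_pow_mul_eq_self {M : Type*} [MonoidWithZero M] [IsRightCancelMulZero M] {q : M}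
    (hq : ∀ m : ℕ, 0 < m → q ^ m ≠ 1) {m : ℕ} {a : M} (h : q ^ m * a = a) (ha : a ≠ 0) :
    m = 0 := by
  by_contra hm
  exact hq m (Nat.pos_of_ne_zero hm) (mul_right_cancel₀ ha (h.trans (one_mul a).symm))

namespace QPlane

variable (k : Type) [Field k] (q : k)

def r : QPlane k q := RingQuot.mkAlgHom k (QPlaneRel k q) (FreeAlgebra.ι k 0)

def s : QPlane k q := RingQuot.mkAlgHom k (QPlaneRel k q) (FreeAlgebra.ι k 1)

lemma s_mul_r : s k q * r k q = q • (r k q * s k q) := by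
  simpa [r, s] using RingQuot.mkAlgHom_rel k (QPlaneRel.comm (k := k) (q := q))

lemma adjoin_r_s : Algebra.adjoin k {r k q, s k q} = ⊤ := by
  have hrange : Set.range (RingQuot.mkAlgHom k (QPlaneRel k q) ∘ FreeAlgebra.ι k)
      = {r k q, s k q} := by
    ext x; simp [Fin.exists_fin_two, r, s, eq_comm]
  rw [← hrange, Set.range_comp, ← AlgHom.map_adjoin, FreeAlgebra.adjoin_range_ι,
    Algebra.map_top, AlgHom.range_eq_top]
  exact RingQuot.mkAlgHom_surjective k _

def monomial (m n : ℕ) : QPlane k q := r k q ^ m * s k q ^ n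

lemma r_mul_monomial (m n : ℕ) : r k q * monomial k q m n = monomial k q (m + 1) n := by
  rw [monomial, monomial, pow_succ', mul_assoc]

lemma s_mul_monomial (m n : ℕ) :
    s k q * monomial k q m n = q ^ m • monomial k q m (n + 1) := by
  have := pow_mul_pow_of_mul_eq_smul (s_mul_r k q) m 1
  simp only [pow_one, one_mul] at this
  rw [monomial, monomial, ← mul_assoc, this, smul_mul_assoc, mul_assoc, ← pow_succ']

lemma monomial_mul_s (m n : ℕ) : monomial k q m n * s k q = monomial k q m (n + 1) := by
  rw [monomial, monomial, mul_assoc, ← pow_succ]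

lemma monomial_mul_r (m n : ℕ) :
    monomial k q m n * r k q = q ^ n • monomial k q (m + 1) n := by
  have := pow_mul_pow_of_mul_eq_smul (s_mul_r k q) 1 n
  simp only [pow_one, mul_one] at this
  rw [monomial, monomial, mul_assoc, this, mul_smul_comm, ← mul_assoc, ← pow_succ]

lemma span_monomial_eq_top :
    Submodule.span k (Set.range fun p : ℕ × ℕ => monomial k q p.1 p.2) = ⊤ := by
  have hmem : ∀ {c : k} {m n : ℕ}, c • monomial k q m n ∈
      Submodule.span k (Set.range fun p : ℕ × ℕ => monomial k q p.1 p.2) :=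
    fun {c m n} => Submodule.smul_mem _ c (Submodule.subset_span ⟨(m, n), rfl⟩)
  refine Submodule.eq_top_of_one_mem_of_mul_mem (adjoin_r_s k q) ?_ ?_
  · simpa [monomial] using hmem (c := 1) (m := 0) (n := 0)
  · rintro x hx t ht
    induction ht using Submodule.span_induction with
    | mem t ht =>
      obtain ⟨⟨m, n⟩, rfl⟩ := ht
      rcases hx with rfl | rfl
      · simpa [r_mul_monomial] using hmem (c := 1) (m := m + 1) (n := n)
      · rw [s_mul_monomial]; exact hmem
    | zero => simp
    | add t u _ _ ht hu => rw [mul_add]; exact Submodule.add_mem _ ht hu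
    | smul c t _ ht => rw [mul_smul_comm]; exact Submodule.smul_mem _ c ht

def rAction : Module.End k ((ℕ × ℕ) →₀ k) :=
  Finsupp.weightedShift (fun p => (p.1 + 1, p.2)) 1

def sAction : Module.End k ((ℕ × ℕ) →₀ k) :=
  Finsupp.weightedShift (fun p => (p.1, p.2 + 1)) fun p => q ^ p.1

def rep : QPlane k q →ₐ[k] Module.End k ((ℕ × ℕ) →₀ k) :=
  RingQuot.liftAlgHom k ⟨FreeAlgebra.lift k ![rAction k, sAction k q], by
    rintro _ _ ⟨⟩
    ext p : 2
    simp [rAction, sAction, Finsupp.smul_single, pow_succ, mul_comm]⟩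

@[simp] lemma rep_r : rep k q (r k q) = rAction k := by
  simp [rep, r, RingQuot.liftAlgHom_mkAlgHom_apply]

@[simp] lemma rep_s : rep k q (s k q) = sAction k q := by
  simp [rep, s, RingQuot.liftAlgHom_mkAlgHom_apply]

def toFinsupp : QPlane k q →ₗ[k] (ℕ × ℕ) →₀ k :=
  (LinearMap.applyₗ (Finsupp.single (0, 0) 1)).comp (rep k q).toLinearMap

lemma toFinsupp_mul (a b : QPlane k q) :
    toFinsupp k q (a * b) = rep k q a (toFinsupp k q b) := by
  simp [toFinsupp]

lemma toFinsupp_algebraMap (c : k) :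
    toFinsupp k q (algebraMap k _ c) = Finsupp.single (0, 0) c := by
  simp [toFinsupp, Algebra.algebraMap_eq_smul_one, Finsupp.smul_single]

@[simp] lemma toFinsupp_monomial (m n : ℕ) :
    toFinsupp k q (monomial k q m n) = Finsupp.single (m, n) 1 := by
  induction m with
  | zero =>
    induction n with
    | zero => simpa [monomial] using toFinsupp_algebraMap k q 1
    | succ n ih =>
      have h := s_mul_monomial k q 0 n
      rw [pow_zero, one_smul] at h
      rw [← h, toFinsupp_mul, ih, rep_s, sAction, Finsupp.weightedShift_single]
      simp
  | succ m ih => rw [← r_mul_monomial, toFinsupp_mul, ih, rep_r, rAction]; simp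

lemma linearIndependent_monomial :
    LinearIndependent k fun p : ℕ × ℕ => monomial k q p.1 p.2 :=
  .of_comp (toFinsupp k q) (by simpa [Function.comp_def] using
    Finsupp.linearIndependent_single_one k (ℕ × ℕ))

def monomialBasis : Basis (ℕ × ℕ) k (QPlane k q) :=
  .mk (linearIndependent_monomial k q) (span_monomial_eq_top k q).ge

lemma toFinsupp_eq_repr : toFinsupp k q = (monomialBasis k q).repr.toLinearMap :=
  (monomialBasis k q).ext fun p => by
    rw [LinearEquiv.coe_coe, Basis.repr_self, monomialBasis, Basis.mk_apply, toFinsupp_monomial]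

lemma toFinsupp_injective : Function.Injective (toFinsupp k q) := by
  rw [toFinsupp_eq_repr]
  exact (monomialBasis k q).repr.injective

lemma toFinsupp_mul_s (z : QPlane k q) :
    toFinsupp k q (z * s k q)
      = Finsupp.weightedShift (fun p => (p.1, p.2 + 1)) 1 (toFinsupp k q z) := by
  have : toFinsupp k q ∘ₗ LinearMap.mulRight k (s k q)
      = Finsupp.weightedShift (fun p => (p.1, p.2 + 1)) 1 ∘ₗ toFinsupp k q :=
    LinearMap.ext_on_range (span_monomial_eq_top k q) fun p => by simp [monomial_mul_s]
  exact LinearMap.congr_fun this z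

lemma toFinsupp_mul_r (z : QPlane k q) :
    toFinsupp k q (z * r k q)
      = Finsupp.weightedShift (fun p => (p.1 + 1, p.2)) (fun p => q ^ p.2) (toFinsupp k q z) := by
  have : toFinsupp k q ∘ₗ LinearMap.mulRight k (r k q)
      = Finsupp.weightedShift (fun p => (p.1 + 1, p.2)) (fun p => q ^ p.2) ∘ₗ toFinsupp k q :=
    LinearMap.ext_on_range (span_monomial_eq_top k q) fun p => by
      simp [monomial_mul_r, Finsupp.smul_single]
  exact LinearMap.congr_fun this z

variable {k q} in
theorem center_eq_bot (hq : ∀ m : ℕ, 0 < m → q ^ m ≠ 1) :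
    Subalgebra.center k (QPlane k q) = ⊥ := by
  refine le_antisymm (fun z hz => ?_) bot_le
  have hcomm := Subalgebra.mem_center_iff.mp hz
  set x := toFinsupp k q z
  have succ_fst_injective : Function.Injective fun p : ℕ × ℕ => (p.1 + 1, p.2) :=
    fun a b h => by simpa [Prod.ext_iff] using h
  have succ_snd_injective : Function.Injective fun p : ℕ × ℕ => (p.1, p.2 + 1) :=
    fun a b h => by simpa [Prod.ext_iff] using h
  have hs : ∀ p : ℕ × ℕ, q ^ p.1 * x p = x p := fun p => by
    have h := congr(toFinsupp k q $(hcomm (s k q)) (p.1, p.2 + 1))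
    rw [toFinsupp_mul_s, toFinsupp_mul, rep_s, sAction,
      Finsupp.weightedShift_apply_apply succ_snd_injective,
      Finsupp.weightedShift_apply_apply succ_snd_injective] at h
    simpa using h
  have hr : ∀ p : ℕ × ℕ, q ^ p.2 * x p = x p := fun p => by
    have h := congr(toFinsupp k q $(hcomm (r k q)) (p.1 + 1, p.2))
    rw [toFinsupp_mul_r, toFinsupp_mul, rep_r, rAction,
      Finsupp.weightedShift_apply_apply succ_fst_injective,
      Finsupp.weightedShift_apply_apply succ_fst_injective] at h
    simpa using h.symm
  have hx : x = toFinsupp k q (algebraMap k _ (x (0, 0))) := by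
    rw [toFinsupp_algebraMap, Finsupp.eq_single_iff]
    refine ⟨fun p hp => ?_, rfl⟩
    have hp := Finsupp.mem_support_iff.mp hp
    simp [Prod.ext_iff, eq_zero_of_pow_mul_eq_self hq (hs p) hp,
      eq_zero_of_pow_mul_eq_self hq (hr p) hp]
  exact ⟨x (0, 0), toFinsupp_injective k q hx.symm⟩

lemma not_moduleFinite : ¬ Module.Finite k (QPlane k q) := fun _ =>
  have := Module.Finite.finite_basis (monomialBasis k q)
  _root_.not_finite (ℕ × ℕ)

end QPlane

theorem stmt17_general (k : Type) [Field k] (q : k)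
    (hq : ∀ m : ℕ, 0 < m → q ^ m ≠ 1) :
    Subalgebra.center k (QPlane k q) = ⊥ ∧
    ¬ Module.Finite (Subalgebra.center k (QPlane k q)) (QPlane k q) :=
  ⟨QPlane.center_eq_bot hq,
    Subalgebra.not_finite_of_eq_bot (QPlane.center_eq_bot hq) (QPlane.not_moduleFinite k q)⟩

/-- Let `q ∈ kˣ` not be a root of unity.  Then the center of the
quantum plane `R = k⟨r,s⟩/(sr − q·rs)` is `k` (the scalars), and consequently `R` is not
finitely generated as a module over its center. -/
theorem stmt17 (k : Type) [Field k] (q : k) (hq0 : q ≠ 0)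
    (hq : ∀ m : ℕ, 0 < m → q ^ m ≠ 1) :
    Subalgebra.center k (QPlane k q) = ⊥ ∧
    ¬ Module.Finite (Subalgebra.center k (QPlane k q)) (QPlane k q) :=
  stmt17_general k q hq
end
end
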